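/- arXiv:1808.01362 — 2 statements merged into one kernel-verified Lean document; each statement's English description precedes it below -/
import Mathlib

section
/- Let n, k, j, i be integers with n ≥ k > 0, 0 ≤ j < n and i ≥ 1, and let f*_{(n,k)∖(j),i}(q) denote the distribution of the major index over standard Young tableaux of skew shape (n,k)∖(j) with exactly i descents in which the entry 1 lies in the first (top) row. Then f*_{(n,k)∖(j),i}(q) = q^{i²}·( [n−j choose i]_q·[k−1 choose i−1]_q − [n choose i−1]_q·[k−j−1 choose i]_q ). -/
open Polynomial
open scoped Classical

noncomputable section

/-- The set of cells of the skew shape `outer \ inner`, where `outer` and `inner` are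
lists of row lengths (rows and columns are 0-indexed): the cell `(r, c)` is present
iff `inner.getD r 0 ≤ c < outer.getD r 0`. -/
def skewCells (outer inner : List ℕ) : Finset (ℕ × ℕ) :=
  ((Finset.range outer.length) ×ˢ (Finset.range (outer.foldr max 0))).filter
    (fun p => inner.getD p.1 0 ≤ p.2 ∧ p.2 < outer.getD p.1 0)

/-- `pos` encodes a standard Young tableau of skew shape `outer \ inner`:
`pos k` is the cell containing the entry `k + 1`.  The conditions say that the
entries are a bijective filling which increases left to right along rows and
top to bottom down columns. -/
def IsSYT (outer inner : List ℕ)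
    (pos : Fin (skewCells outer inner).card → ↥(skewCells outer inner)) : Prop :=
  Function.Injective pos ∧
  (∀ a b, ((pos a : ℕ × ℕ)).1 = ((pos b : ℕ × ℕ)).1 →
      ((pos a : ℕ × ℕ)).2 < ((pos b : ℕ × ℕ)).2 → a < b) ∧
  (∀ a b, ((pos a : ℕ × ℕ)).2 = ((pos b : ℕ × ℕ)).2 →
      ((pos a : ℕ × ℕ)).1 < ((pos b : ℕ × ℕ)).1 → a < b)

/-- The finite set of standard Young tableaux of skew shape `outer \ inner`. -/
def SYTs (outer inner : List ℕ) :
    Finset (Fin (skewCells outer inner).card → ↥(skewCells outer inner)) :=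
  Finset.univ.filter (IsSYT outer inner)

/-- The descent set of the tableau `pos`: the values `v` such that `v + 1` lies in a
strictly lower row than `v` (entry `v` is at index `v - 1`, entry `v+1` at index `v`). -/
def desSet (outer inner : List ℕ)
    (pos : Fin (skewCells outer inner).card → ↥(skewCells outer inner)) : Finset ℕ :=
  (Finset.range (skewCells outer inner).card).filter
    (fun v => ∃ a b : Fin (skewCells outer inner).card,
      (a : ℕ) + 1 = v ∧ (b : ℕ) = v ∧ ((pos a : ℕ × ℕ)).1 < ((pos b : ℕ × ℕ)).1)

/-- The major index of a tableau: the sum of its descents. -/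
def majStat (outer inner : List ℕ)
    (pos : Fin (skewCells outer inner).card → ↥(skewCells outer inner)) : ℕ :=
  (desSet outer inner pos).sum id

/-- The number of descents of a tableau. -/
def desStat (outer inner : List ℕ)
    (pos : Fin (skewCells outer inner).card → ↥(skewCells outer inner)) : ℕ :=
  (desSet outer inner pos).card

/-- `f_{outer∖inner, i}(q) = Σ_{τ ∈ SYT(outer∖inner), des(τ) = i} q^{maj(τ)} ∈ ℤ[q]`. -/
def fSkew (outer inner : List ℕ) (i : ℕ) : Polynomial ℤ :=
  ∑ pos ∈ (SYTs outer inner).filter (fun pos => desStat outer inner pos = i),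
    X ^ majStat outer inner pos

/-- `f_{λ, i}(q)` for a straight (non-skew) shape `λ`. -/
def fPoly (lam : List ℕ) (i : ℕ) : Polynomial ℤ := fSkew lam [] i

/-- Gaussian binomial coefficients for natural arguments, via the q-Pascal recurrence
`[M+1, N+1]_q = [M, N+1]_q + q^(M-N) [M, N]_q`, with `[M, 0]_q = 1`, `[0, N+1]_q = 0`. -/
def qBinomAux : ℕ → ℕ → Polynomial ℤ
  | _, 0 => 1
  | 0, _ + 1 => 0
  | M + 1, N + 1 => qBinomAux M (N + 1) + X ^ (M - N) * qBinomAux M N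

/-- Gaussian binomial coefficient `[M choose N]_q ∈ ℤ[q]`, with the convention that
it is `0` unless `0 ≤ N ≤ M`. -/
def qBinom (M N : ℤ) : Polynomial ℤ :=
  if 0 ≤ N ∧ N ≤ M then qBinomAux M.toNat N.toNat else 0

/-- `f*_{(n,k)∖(j),i}(q)`: the distribution of the major index over standard Young
tableaux of skew shape `(n,k)∖(j)` with exactly `i` descents in which the entry `1`
lies in the first (top) row. -/
def fStar (n k j i : ℕ) : Polynomial ℤ :=
  ∑ pos ∈ (SYTs [n, k] [j]).filter (fun pos => desStat [n, k] [j] pos = i ∧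
      ∀ a : Fin (skewCells [n, k] [j]).card, (a : ℕ) = 0 → ((pos a : ℕ × ℕ)).1 = 0),
    X ^ majStat [n, k] [j] pos

namespace SkewAux

/-- number of `true`s among positions `≤ t`. -/
def cntT {N : ℕ} (w : Fin N → Bool) (t : Fin N) : ℕ :=
  (Finset.univ.filter (fun s => s ≤ t ∧ w s = true)).card

/-- number of `false`s among positions `≤ t`. -/
def cntF {N : ℕ} (w : Fin N → Bool) (t : Fin N) : ℕ :=
  (Finset.univ.filter (fun s => s ≤ t ∧ w s = false)).card

def onesCt {N : ℕ} (w : Fin N → Bool) : ℕ :=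
  (Finset.univ.filter (fun s => w s = true)).card

def Ballot {N : ℕ} (j : ℕ) (w : Fin N → Bool) : Prop :=
  ∀ t, w t = true → cntT w t ≤ cntF w t + j

def WSet (N k j : ℕ) : Finset (Fin N → Bool) :=
  Finset.univ.filter (fun w => onesCt w = k ∧ Ballot j w ∧
    ∀ t : Fin N, (t : ℕ) = 0 → w t = false)

def riseSet {N : ℕ} (w : Fin N → Bool) : Finset ℕ :=
  (Finset.range N).filter (fun v => ∃ a b : Fin N,
    (a : ℕ) + 1 = v ∧ (b : ℕ) = v ∧ w a = false ∧ w b = true)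

def F (N k j i : ℕ) : Polynomial ℤ :=
  ∑ w ∈ (WSet N k j).filter (fun w => (riseSet w).card = i),
    X ^ (riseSet w).sum id

def E (N k j i : ℕ) (b : Bool) : Polynomial ℤ :=
  ∑ w ∈ (WSet N k j).filter (fun w => (riseSet w).card = i ∧
      ∀ t : Fin N, (t : ℕ) + 1 = N → w t = b),
    X ^ (riseSet w).sum id

/- basic counting lemmas -/

lemma card_filter_succ {M : ℕ} (P : Fin (M+1) → Prop) [DecidablePred P] :
    (Finset.univ.filter P).card
      = (Finset.univ.filter (fun s : Fin M => P s.castSucc)).card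
        + (if P (Fin.last M) then 1 else 0) := by
  classical
  rw [Finset.card_filter, Finset.card_filter, Fin.sum_univ_castSucc]

lemma onesCt_snoc {M : ℕ} (w : Fin M → Bool) (b : Bool) :
    onesCt (Fin.snoc w b) = onesCt w + (if b = true then 1 else 0) := by
  unfold onesCt
  rw [Finset.card_filter, Finset.card_filter, Fin.sum_univ_castSucc]
  simp [Fin.snoc_castSucc, Fin.snoc_last]

lemma cntT_snoc {M : ℕ} (w : Fin M → Bool) (b : Bool) (t : Fin M) :
    cntT (Fin.snoc w b) t.castSucc = cntT w t := by
  unfold cntT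
  rw [Finset.card_filter, Finset.card_filter, Fin.sum_univ_castSucc]
  have h1 : ¬ (Fin.last M ≤ t.castSucc) := by
    simp [Fin.le_def]
  simp [Fin.snoc_castSucc, Fin.snoc_last, h1, Fin.castSucc_le_castSucc_iff]

lemma cntF_snoc {M : ℕ} (w : Fin M → Bool) (b : Bool) (t : Fin M) :
    cntF (Fin.snoc w b) t.castSucc = cntF w t := by
  unfold cntF
  rw [Finset.card_filter, Finset.card_filter, Fin.sum_univ_castSucc]
  have h1 : ¬ (Fin.last M ≤ t.castSucc) := by
    simp [Fin.le_def]
  simp [Fin.snoc_castSucc, Fin.snoc_last, h1, Fin.castSucc_le_castSucc_iff]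

lemma cntT_last {M : ℕ} (w : Fin (M+1) → Bool) :
    cntT w (Fin.last M) = onesCt w := by
  unfold cntT onesCt
  congr 1
  apply Finset.filter_congr
  intro s _
  simp [Fin.le_last]

lemma ballot_snoc_false {M : ℕ} (w : Fin M → Bool) (j : ℕ) :
    Ballot j (Fin.snoc w false) ↔ Ballot j w := by
  constructor
  · intro H t ht
    have := H t.castSucc (by simpa [Fin.snoc_castSucc] using ht)
    rwa [cntT_snoc, cntF_snoc] at this
  · intro H t ht
    induction t using Fin.lastCases with
    | last => simp [Fin.snoc_last] at ht
    | cast t =>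
      rw [Fin.snoc_castSucc] at ht
      rw [cntT_snoc, cntF_snoc]
      exact H t ht

def falsesCt {N : ℕ} (w : Fin N → Bool) : ℕ :=
  (Finset.univ.filter (fun s => w s = false)).card

lemma falsesCt_add {N : ℕ} (w : Fin N → Bool) : onesCt w + falsesCt w = N := by
  unfold onesCt falsesCt
  have h : (Finset.univ.filter (fun s => w s = false))
      = (Finset.univ.filter (fun s => ¬ (w s = true))) := by
    apply Finset.filter_congr; intro s _; simp
  rw [h, Finset.card_filter_add_card_filter_not]
  simp

lemma falsesCt_snoc {M : ℕ} (w : Fin M → Bool) (b : Bool) :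
    falsesCt (Fin.snoc w b) = falsesCt w + (if b = false then 1 else 0) := by
  unfold falsesCt
  rw [Finset.card_filter, Finset.card_filter, Fin.sum_univ_castSucc]
  simp [Fin.snoc_castSucc, Fin.snoc_last]

lemma cntF_last {M : ℕ} (w : Fin (M+1) → Bool) :
    cntF w (Fin.last M) = falsesCt w := by
  unfold cntF falsesCt
  congr 1
  apply Finset.filter_congr
  intro s _
  simp [Fin.le_last]

lemma ballot_snoc_true {M : ℕ} (w : Fin M → Bool) (j : ℕ) :
    Ballot j (Fin.snoc w true) ↔ Ballot j w ∧ onesCt w + 1 ≤ falsesCt w + j := by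
  constructor
  · intro H
    refine ⟨?_, ?_⟩
    · intro t ht
      have := H t.castSucc (by simpa [Fin.snoc_castSucc] using ht)
      rwa [cntT_snoc, cntF_snoc] at this
    · have := H (Fin.last M) (by simp [Fin.snoc_last])
      rw [cntT_last, cntF_last, onesCt_snoc, falsesCt_snoc] at this
      simpa using this
  · rintro ⟨H, hlast⟩ t ht
    induction t using Fin.lastCases with
    | last =>
      rw [cntT_last, cntF_last, onesCt_snoc, falsesCt_snoc]
      simpa using hlast
    | cast t =>
      rw [Fin.snoc_castSucc] at ht
      rw [cntT_snoc, cntF_snoc]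
      exact H t ht

lemma firstCond_snoc {M : ℕ} (hM : 1 ≤ M) (w : Fin M → Bool) (b : Bool) :
    (∀ t : Fin (M+1), (t : ℕ) = 0 → (Fin.snoc w b : Fin (M+1) → Bool) t = false)
      ↔ (∀ t : Fin M, (t : ℕ) = 0 → w t = false) := by
  constructor
  · intro H t ht
    have := H t.castSucc (by simpa using ht)
    rwa [Fin.snoc_castSucc] at this
  · intro H t ht
    induction t using Fin.lastCases with
    | last => simp [Fin.val_last] at ht; omega
    | cast t =>
      have := H t (by simpa using ht)
      simpa [Fin.snoc_castSucc] using this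

lemma lastCond_iff {M : ℕ} (w : Fin (M+1) → Bool) (b : Bool) :
    (∀ t : Fin (M+1), (t : ℕ) + 1 = M + 1 → w t = b) ↔ w (Fin.last M) = b := by
  constructor
  · intro H; exact H (Fin.last M) (by simp)
  · intro H t ht
    have : t = Fin.last M := by
      apply Fin.ext; simp [Fin.val_last]; omega
    rw [this]; exact H

lemma riseSet_snoc_false {M : ℕ} (w : Fin M → Bool) :
    riseSet (Fin.snoc w false) = riseSet w := by
  ext v
  simp only [riseSet, Finset.mem_filter, Finset.mem_range]
  constructor
  · rintro ⟨hv, a, c, ha, hc, hwa, hwc⟩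
    rcases Fin.eq_castSucc_or_eq_last c with ⟨c', rfl⟩ | rfl
    · rw [Fin.snoc_castSucc] at hwc
      have hc2 : (c' : ℕ) = v := by simpa using hc
      have hvM : v < M := by have := c'.isLt; omega
      have haM : (a : ℕ) < M := by omega
      rcases Fin.eq_castSucc_or_eq_last a with ⟨a', rfl⟩ | rfl
      · rw [Fin.snoc_castSucc] at hwa
        exact ⟨hvM, a', c', by simpa using ha, by simpa using hc, hwa, hwc⟩
      · simp [Fin.val_last] at haM
    · rw [Fin.snoc_last] at hwc
      exact absurd hwc (by simp)
  · rintro ⟨hv, a, c, ha, hc, hwa, hwc⟩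
    exact ⟨by omega, a.castSucc, c.castSucc,
      by simpa using ha, by simpa using hc,
      by rwa [Fin.snoc_castSucc], by rwa [Fin.snoc_castSucc]⟩

lemma riseSet_snoc_true {M : ℕ} (w : Fin (M+1) → Bool) :
    riseSet (Fin.snoc w true)
      = riseSet w ∪ (if w (Fin.last M) = false then {M+1} else ∅) := by
  ext v
  simp only [riseSet, Finset.mem_filter, Finset.mem_range, Finset.mem_union]
  constructor
  · rintro ⟨hv, a, c, ha, hc, hwa, hwc⟩
    rcases Fin.eq_castSucc_or_eq_last c with ⟨c', rfl⟩ | rfl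
    · rw [Fin.snoc_castSucc] at hwc
      have hc2 : (c' : ℕ) = v := by simpa using hc
      have hvM : v < M + 1 := by have := c'.isLt; omega
      have haM : (a : ℕ) < M + 1 := by omega
      rcases Fin.eq_castSucc_or_eq_last a with ⟨a', rfl⟩ | rfl
      · rw [Fin.snoc_castSucc] at hwa
        exact Or.inl ⟨hvM, a', c', by simpa using ha, by simpa using hc, hwa, hwc⟩
      · simp [Fin.val_last] at haM
    · have hvv : v = M + 1 := by simpa [Fin.val_last] using hc.symm
      have haval : (a : ℕ) = M := by omega
      rcases Fin.eq_castSucc_or_eq_last a with ⟨a', rfl⟩ | rfl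
      · rw [Fin.snoc_castSucc] at hwa
        have : a' = Fin.last M := by apply Fin.ext; simpa [Fin.val_last] using haval
        rw [this] at hwa
        right
        rw [if_pos hwa]
        simp [hvv]
      · rw [Fin.snoc_last] at hwa
        exact absurd hwa (by simp)
  · rintro (⟨hv, a, c, ha, hc, hwa, hwc⟩ | hmem)
    · exact ⟨by omega, a.castSucc, c.castSucc,
        by simpa using ha, by simpa using hc,
        by rwa [Fin.snoc_castSucc], by rwa [Fin.snoc_castSucc]⟩
    · by_cases hlast : w (Fin.last M) = false
      · rw [if_pos hlast] at hmem
        simp only [Finset.mem_singleton] at hmem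
        subst hmem
        refine ⟨by omega, (Fin.last M).castSucc, Fin.last (M+1), ?_, ?_, ?_, ?_⟩
        · simp [Fin.val_last]
        · simp [Fin.val_last]
        · rwa [Fin.snoc_castSucc]
        · rw [Fin.snoc_last]
      · rw [if_neg hlast] at hmem
        simp at hmem

lemma riseSet_subset {N : ℕ} (w : Fin N → Bool) : riseSet w ⊆ Finset.range N :=
  Finset.filter_subset _ _

lemma mem_WSet {N k j : ℕ} (w : Fin N → Bool) :
    w ∈ WSet N k j ↔ onesCt w = k ∧ Ballot j w ∧ ∀ t : Fin N, (t : ℕ) = 0 → w t = false := by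
  simp [WSet]

lemma notmem_riseSet {M : ℕ} (w : Fin M → Bool) : M ∉ riseSet w := by
  intro h
  have := riseSet_subset w h
  simp at this

lemma F_split {M k j i : ℕ} :
    F (M+1) k j i = E (M+1) k j i false + E (M+1) k j i true := by
  unfold F E
  rw [← Finset.sum_filter_add_sum_filter_not
    (((WSet (M+1) k j)).filter (fun w => (riseSet w).card = i))
    (fun w => w (Fin.last M) = false) (fun w => X ^ (riseSet w).sum id)]
  congr 1
  · rw [Finset.filter_filter]
    apply Finset.sum_congr _ (fun _ _ => rfl)
    apply Finset.filter_congr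
    intro w _
    rw [lastCond_iff]
  · rw [Finset.filter_filter]
    apply Finset.sum_congr _ (fun _ _ => rfl)
    apply Finset.filter_congr
    intro w _
    rw [lastCond_iff]
    simp only [Bool.not_eq_false]

lemma E_false_eq {M k j i : ℕ} (hM : 1 ≤ M) : E (M+1) k j i false = F M k j i := by
  unfold E F
  refine Finset.sum_nbij' (fun w => Fin.init w) (fun w => (Fin.snoc w false : Fin (M+1) → Bool))
    ?_ ?_ ?_ ?_ ?_
  · intro w hw
    simp only [Finset.mem_filter, mem_WSet] at hw ⊢
    obtain ⟨⟨h1, h2, h3⟩, h4, h5⟩ := hw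
    rw [lastCond_iff] at h5
    have hw' := Fin.snoc_init_self w
    rw [h5] at hw'
    have hrise : riseSet w = riseSet (Fin.init w) := by
      conv_lhs => rw [← hw']
      exact riseSet_snoc_false _
    refine ⟨⟨?_, ?_, ?_⟩, ?_⟩
    · have := onesCt_snoc (Fin.init w) false
      rw [hw'] at this
      simpa [this] using h1
    · have := ballot_snoc_false (Fin.init w) j
      rw [hw'] at this
      exact this.mp h2
    · have := firstCond_snoc hM (Fin.init w) false
      rw [hw'] at this
      exact this.mp h3
    · rw [← hrise]; exact h4
  · intro w hw
    simp only [Finset.mem_filter, mem_WSet] at hw ⊢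
    obtain ⟨⟨h1, h2, h3⟩, h4⟩ := hw
    refine ⟨⟨?_, ?_, ?_⟩, ?_, ?_⟩
    · rw [onesCt_snoc]; simpa using h1
    · exact (ballot_snoc_false w j).mpr h2
    · exact (firstCond_snoc hM w false).mpr h3
    · rw [riseSet_snoc_false]; exact h4
    · rw [lastCond_iff]; simp [Fin.snoc_last]
  · intro w hw
    simp only [Finset.mem_filter, mem_WSet] at hw
    obtain ⟨⟨h1, h2, h3⟩, h4, h5⟩ := hw
    rw [lastCond_iff] at h5
    have hw' := Fin.snoc_init_self w
    rw [h5] at hw'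
    exact hw'
  · intro w _
    exact Fin.init_snoc _ _
  · intro w hw
    simp only [Finset.mem_filter, mem_WSet] at hw
    obtain ⟨⟨h1, h2, h3⟩, h4, h5⟩ := hw
    rw [lastCond_iff] at h5
    have hw' := Fin.snoc_init_self w
    rw [h5] at hw'
    have hrise : riseSet w = riseSet (Fin.init w) := by
      conv_lhs => rw [← hw']
      exact riseSet_snoc_false _
    rw [hrise]

lemma E_true_step1 {M k j i : ℕ} (hM : 1 ≤ M) (hk : 1 ≤ k) (hbal : k ≤ (M+1-k) + j) :
    E (M+1) k j i true
      = ∑ w ∈ (WSet M (k-1) j).filter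
          (fun w => (riseSet (Fin.snoc w true : Fin (M+1) → Bool)).card = i),
        X ^ (riseSet (Fin.snoc w true : Fin (M+1) → Bool)).sum id := by
  unfold E
  refine Finset.sum_nbij' (fun w => Fin.init w) (fun w => (Fin.snoc w true : Fin (M+1) → Bool))
    ?_ ?_ ?_ ?_ ?_
  · intro w hw
    simp only [Finset.mem_filter, mem_WSet] at hw ⊢
    obtain ⟨⟨h1, h2, h3⟩, h4, h5⟩ := hw
    rw [lastCond_iff] at h5
    have hw' := Fin.snoc_init_self w
    rw [h5] at hw'
    refine ⟨⟨?_, ?_, ?_⟩, ?_⟩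
    · have := onesCt_snoc (Fin.init w) true
      rw [hw'] at this
      simp at this
      omega
    · have := ballot_snoc_true (Fin.init w) j
      rw [hw'] at this
      exact (this.mp h2).1
    · have := firstCond_snoc hM (Fin.init w) true
      rw [hw'] at this
      exact this.mp h3
    · rw [hw']; exact h4
  · intro w hw
    simp only [Finset.mem_filter, mem_WSet] at hw ⊢
    obtain ⟨⟨h1, h2, h3⟩, h4⟩ := hw
    have hfc := falsesCt_add w
    refine ⟨⟨?_, ?_, ?_⟩, ?_, ?_⟩
    · rw [onesCt_snoc]; simp [h1]; omega
    · refine (ballot_snoc_true w j).mpr ⟨h2, ?_⟩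
      omega
    · exact (firstCond_snoc hM w true).mpr h3
    · exact h4
    · rw [lastCond_iff]; simp [Fin.snoc_last]
  · intro w hw
    simp only [Finset.mem_filter, mem_WSet] at hw
    obtain ⟨⟨h1, h2, h3⟩, h4, h5⟩ := hw
    rw [lastCond_iff] at h5
    have hw' := Fin.snoc_init_self w
    rw [h5] at hw'
    exact hw'
  · intro w _
    exact Fin.init_snoc _ _
  · intro w hw
    simp only [Finset.mem_filter, mem_WSet] at hw
    obtain ⟨⟨h1, h2, h3⟩, h4, h5⟩ := hw
    rw [lastCond_iff] at h5
    have hw' := Fin.snoc_init_self w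
    rw [h5] at hw'
    rw [hw']

set_option maxHeartbeats 1000000 in
lemma E_true_eq {M k j i : ℕ} (hk : 1 ≤ k) (hbal : k ≤ (M+2-k) + j) :
    E (M+2) k j i true
      = (if 1 ≤ i then X ^ (M+1) * E (M+1) (k-1) j (i-1) false else 0)
        + E (M+1) (k-1) j i true := by
  rw [E_true_step1 (M := M+1) (by omega) hk (by omega)]
  rw [← Finset.sum_filter_add_sum_filter_not
    ((WSet (M+1) (k-1) j).filter
      (fun w => (riseSet (Fin.snoc w true : Fin (M+2) → Bool)).card = i))
    (fun w => w (Fin.last M) = false) _]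
  congr 1
  · by_cases hi : 1 ≤ i
    · rw [if_pos hi]
      unfold E
      rw [Finset.mul_sum, Finset.filter_filter]
      have hset : ∀ w : Fin (M+1) → Bool, w ∈ WSet (M+1) (k-1) j →
          (((riseSet (Fin.snoc w true : Fin (M+2) → Bool)).card = i ∧ w (Fin.last M) = false)
            ↔ ((riseSet w).card = i - 1 ∧
                ∀ t : Fin (M+1), (t : ℕ) + 1 = M + 1 → w t = false)) := by
        intro w _
        rw [lastCond_iff]
        constructor
        · rintro ⟨hc, hl⟩
          rw [riseSet_snoc_true, if_pos hl] at hc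
          rw [Finset.union_comm, ← Finset.insert_eq, Finset.card_insert_of_notMem
            (notmem_riseSet w)] at hc
          exact ⟨by omega, hl⟩
        · rintro ⟨hc, hl⟩
          refine ⟨?_, hl⟩
          rw [riseSet_snoc_true, if_pos hl]
          rw [Finset.union_comm, ← Finset.insert_eq, Finset.card_insert_of_notMem
            (notmem_riseSet w)]
          omega
      rw [Finset.filter_congr hset]
      apply Finset.sum_congr rfl
      intro w hw
      simp only [Finset.mem_filter, mem_WSet] at hw
      obtain ⟨-, -, hl⟩ := hw
      rw [lastCond_iff] at hl
      rw [riseSet_snoc_true, if_pos hl, Finset.union_comm, ← Finset.insert_eq,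
        Finset.sum_insert (notmem_riseSet w)]
      rw [id, pow_add]
    · rw [if_neg hi]
      apply Finset.sum_eq_zero
      intro w hw
      exfalso
      simp only [Finset.mem_filter, mem_WSet] at hw
      obtain ⟨⟨⟨-, -, -⟩, hc⟩, hl⟩ := hw
      rw [riseSet_snoc_true, if_pos hl, Finset.union_comm, ← Finset.insert_eq,
        Finset.card_insert_of_notMem (notmem_riseSet w)] at hc
      omega
  · unfold E
    rw [Finset.filter_filter]
    have hset : ∀ w : Fin (M+1) → Bool, w ∈ WSet (M+1) (k-1) j →
        (((riseSet (Fin.snoc w true : Fin (M+2) → Bool)).card = i ∧ ¬ w (Fin.last M) = false)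
          ↔ ((riseSet w).card = i ∧
              ∀ t : Fin (M+1), (t : ℕ) + 1 = M + 1 → w t = true)) := by
      intro w _
      rw [lastCond_iff]
      simp only [Bool.not_eq_false]
      constructor
      · rintro ⟨hc, hl⟩
        rw [riseSet_snoc_true, if_neg (by simp [hl]), Finset.union_empty] at hc
        exact ⟨hc, hl⟩
      · rintro ⟨hc, hl⟩
        refine ⟨?_, hl⟩
        rw [riseSet_snoc_true, if_neg (by simp [hl]), Finset.union_empty]
        exact hc
    rw [Finset.filter_congr hset]
    apply Finset.sum_congr rfl
    intro w hw
    simp only [Finset.mem_filter, mem_WSet] at hw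
    obtain ⟨-, -, hl⟩ := hw
    rw [lastCond_iff] at hl
    rw [riseSet_snoc_true, if_neg (by simp [hl]), Finset.union_empty]

lemma WSet_zero {M j : ℕ} : WSet M 0 j = {fun _ => false} := by
  ext w
  rw [mem_WSet, Finset.mem_singleton]
  constructor
  · rintro ⟨h1, -, -⟩
    funext s
    rw [onesCt] at h1
    rw [Finset.card_eq_zero] at h1
    by_contra hc
    have hs : w s = true := by
      cases hws : w s
      · exact absurd hws hc
      · rfl
    have : s ∈ Finset.univ.filter (fun s => w s = true) := by
      simp [hs]
    rw [h1] at this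
    simp at this
  · intro h
    subst h
    refine ⟨by simp [onesCt], ?_, fun _ _ => rfl⟩
    intro t ht
    simp at ht

lemma riseSet_const_false {N : ℕ} : riseSet (fun _ : Fin N => false) = ∅ := by
  ext v
  simp [riseSet]

lemma F_zero {M j i : ℕ} : F M 0 j i = if i = 0 then 1 else 0 := by
  unfold F
  rw [WSet_zero, Finset.filter_singleton]
  by_cases hi : i = 0
  · rw [if_pos (by rw [riseSet_const_false]; simpa using hi.symm), if_pos hi,
      Finset.sum_singleton, riseSet_const_false]
    simp
  · rw [if_neg (by rw [riseSet_const_false]; simpa using fun h => hi h.symm), if_neg hi,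
      Finset.sum_empty]

lemma E_zero_false {M j i : ℕ} : E (M+1) 0 j i false = if i = 0 then 1 else 0 := by
  unfold E
  rw [WSet_zero, Finset.filter_singleton]
  by_cases hi : i = 0
  · rw [if_pos ⟨by rw [riseSet_const_false]; simpa using hi.symm, fun _ _ => rfl⟩,
      if_pos hi, Finset.sum_singleton, riseSet_const_false]
    simp
  · rw [if_neg, if_neg hi, Finset.sum_empty]
    rintro ⟨hc, -⟩
    rw [riseSet_const_false] at hc
    simp at hc
    exact hi hc.symm

lemma E_zero_true {M j i : ℕ} : E (M+1) 0 j i true = 0 := by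
  unfold E
  rw [WSet_zero, Finset.filter_singleton, if_neg, Finset.sum_empty]
  rintro ⟨-, hl⟩
  have := hl (Fin.last M) (by simp)
  simp at this

lemma F_diag {M j i : ℕ} (hM : 1 ≤ M) : F M M j i = 0 := by
  unfold F
  have hempty : ((WSet M M j).filter (fun w => (riseSet w).card = i)) = ∅ := by
    rw [Finset.eq_empty_iff_forall_notMem]
    intro w hw
    simp only [Finset.mem_filter, mem_WSet] at hw
    obtain ⟨⟨h1, h2, h3⟩, h4⟩ := hw
    have huniv : Finset.univ.filter (fun s => w s = true) = Finset.univ := by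
      apply Finset.eq_univ_of_card
      show onesCt w = _
      rw [h1]
      simp
    have hz : w ⟨0, hM⟩ = true := by
      have : (⟨0, hM⟩ : Fin M) ∈ Finset.univ.filter (fun s => w s = true) := by
        rw [huniv]; exact Finset.mem_univ _
      exact (Finset.mem_filter.mp this).2
    have := h3 ⟨0, hM⟩ rfl
    rw [this] at hz
    simp at hz
  rw [hempty, Finset.sum_empty]

lemma F_i_zero {M k j : ℕ} (hk : 1 ≤ k) : F M k j 0 = 0 := by
  unfold F
  have hempty : ((WSet M k j).filter (fun w => (riseSet w).card = 0)) = ∅ := by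
    rw [Finset.eq_empty_iff_forall_notMem]
    intro w hw
    simp only [Finset.mem_filter, mem_WSet] at hw
    obtain ⟨⟨h1, h2, h3⟩, h4⟩ := hw
    rw [Finset.card_eq_zero] at h4
    have hne : (Finset.univ.filter (fun s => w s = true)).Nonempty := by
      apply Finset.card_pos.mp
      show 0 < onesCt w
      omega
    set t := (Finset.univ.filter (fun s => w s = true)).min' hne with htdef
    have htmem := (Finset.univ.filter (fun s => w s = true)).min'_mem hne
    have ht : w t = true := (Finset.mem_filter.mp htmem).2
    have htv : (t : ℕ) ≠ 0 := by
      intro hc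
      have := h3 t hc
      rw [this] at ht
      simp at ht
    have hplt : (t : ℕ) - 1 < M := by have := t.isLt; omega
    set p : Fin M := ⟨(t : ℕ) - 1, hplt⟩ with hpdef
    have hp : w p = false := by
      cases hwp : w p
      · rfl
      · exfalso
        have hpm : p ∈ Finset.univ.filter (fun s => w s = true) := by simp [hwp]
        have := Finset.min'_le _ p hpm
        rw [← htdef] at this
        rw [Fin.le_def] at this
        simp [hpdef] at this
        omega
    have : (t : ℕ) ∈ riseSet w := by
      rw [riseSet, Finset.mem_filter, Finset.mem_range]
      exact ⟨t.isLt, p, t, by simp [hpdef]; omega, rfl, hp, ht⟩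
    rw [h4] at this
    simp at this
  rw [hempty, Finset.sum_empty]

lemma F_rec {M k j i : ℕ} (hk : 1 ≤ k) (hbal : k ≤ (M+3-k) + j) :
    F (M+3) k j i + F (M+1) (k-1) j i
      = F (M+2) k j i
        + (if 1 ≤ i then X ^ (M+2) * F (M+1) (k-1) j (i-1) else 0)
        + F (M+2) (k-1) j i := by
  have e1 : M + 3 = (M + 2) + 1 := by omega
  have e2 : M + 3 = (M + 1) + 2 := by omega
  have h1 : F (M+3) k j i = E (M+3) k j i false + E (M+3) k j i true := by
    rw [e1]; exact F_split
  have h2 : E (M+3) k j i false = F (M+2) k j i := by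
    rw [e1]; exact E_false_eq (by omega)
  have h3 : E (M+3) k j i true
      = (if 1 ≤ i then X ^ (M+2) * E (M+2) (k-1) j (i-1) false else 0)
        + E (M+2) (k-1) j i true := by
    rw [e2]
    have := E_true_eq (M := M+1) (k := k) (j := j) (i := i) hk (by omega)
    convert this using 3 <;> omega
  have h4 : E (M+2) (k-1) j (i-1) false = F (M+1) (k-1) j (i-1) := by
    have : M + 2 = (M+1) + 1 := by omega
    rw [this]; exact E_false_eq (by omega)
  have h5 : F (M+2) (k-1) j i = E (M+2) (k-1) j i false + E (M+2) (k-1) j i true := by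
    have : M + 2 = (M+1) + 1 := by omega
    rw [this]; exact F_split
  have h6 : E (M+2) (k-1) j i false = F (M+1) (k-1) j i := by
    have : M + 2 = (M+1) + 1 := by omega
    rw [this]; exact E_false_eq (by omega)
  rw [h1, h2, h3, h4, h5, h6]
  ring

lemma B_zero_right (M : ℕ) : qBinomAux M 0 = 1 := by cases M <;> rfl

lemma B_zero_left (N : ℕ) : qBinomAux 0 (N+1) = 0 := rfl

lemma B_pascal (M N : ℕ) :
    qBinomAux (M+1) (N+1) = qBinomAux M (N+1) + X ^ (M-N) * qBinomAux M N := rfl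

lemma B_eq_zero_of_lt : ∀ (M N : ℕ), M < N → qBinomAux M N = 0 := by
  intro M
  induction M with
  | zero =>
    intro N h
    match N, h with
    | (n+1), _ => rfl
  | succ m ih =>
    intro N h
    match N, h with
    | (n+1), h =>
      rw [B_pascal, ih (n+1) (by omega), ih n (by omega)]
      ring

/-- helper: powers in front of possibly-vanishing q-binomial products -/
lemma pow_mul_BB (e1 e2 M N M' N' : ℕ) (h : N ≤ M → N' ≤ M' → e1 = e2) :
    X ^ e1 * (qBinomAux M N * qBinomAux M' N')
      = (X:Polynomial ℤ) ^ e2 * (qBinomAux M N * qBinomAux M' N') := by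
  rcases le_or_gt N M with h1 | h1
  · rcases le_or_gt N' M' with h2 | h2
    · rw [h h1 h2]
    · rw [B_eq_zero_of_lt _ _ h2]; ring
  · rw [B_eq_zero_of_lt _ _ h1]; ring

def P (a k j i : ℕ) : Polynomial ℤ :=
  X ^ (i^2) * (qBinomAux a i * qBinomAux (k-1) (i-1)
    - qBinomAux (a+j) (i-1) * qBinomAux (k-1-j) i)

lemma P_i_zero (a k j : ℕ) : P a k j 0 = 0 := by
  unfold P
  simp [B_zero_right]

lemma P_rec_a1 (k j i : ℕ) (hk : 2 ≤ k) (hi : 1 ≤ i) (hak : k ≤ 1 + j) :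
    P 1 k j i = P 1 (k-1) j i := by
  obtain ⟨K, rfl⟩ : ∃ K, k = K + 2 := ⟨k-2, by omega⟩
  obtain ⟨I, rfl⟩ : ∃ I, i = I + 1 := ⟨i-1, by omega⟩
  unfold P
  simp only [show K + 2 - 1 = K + 1 from rfl, show K + 1 - 1 = K from rfl,
    show I + 1 - 1 = I from rfl, show K + 1 - j = 0 by omega, show K - j = 0 by omega,
    B_zero_left, mul_zero, sub_zero]
  rcases Nat.eq_zero_or_pos I with rfl | hI
  · simp [B_zero_right]
  · obtain ⟨I', rfl⟩ : ∃ I', I = I' + 1 := ⟨I - 1, by omega⟩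
    rw [B_eq_zero_of_lt 1 (I' + 2) (by omega)]
    ring

lemma P_rec_k1 (a j i : ℕ) (ha : 2 ≤ a) (hi : 1 ≤ i) :
    P a 1 j i = P (a-1) 1 j i + X ^ a * (if i = 1 then 1 else 0) := by
  obtain ⟨A, rfl⟩ : ∃ A, a = A + 2 := ⟨a-2, by omega⟩
  unfold P
  simp only [show (1:ℕ) - 1 = 0 from rfl, show (0:ℕ) - j = 0 by omega,
    show A + 2 - 1 = A + 1 from rfl, show A + 2 - 1 + j = A + 1 + j from rfl]
  rcases Nat.eq_zero_or_pos (i - 1) with hi0 | hi1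
  · have : i = 1 := by omega
    subst this
    rw [if_pos rfl]
    simp only [show (1:ℕ) - 1 = 0 from rfl, B_zero_right, pow_one, one_pow]
    have p1 : qBinomAux (A+2) 1 = qBinomAux (A+1) 1 + X ^ (A+1) * qBinomAux (A+1) 0 := by
      simpa using B_pascal (A+1) 0
    rw [p1, B_zero_right, show qBinomAux 0 1 = 0 from rfl]
    ring
  · obtain ⟨I, rfl⟩ : ∃ I, i = I + 2 := ⟨i-2, by omega⟩
    rw [if_neg (by omega)]
    simp only [show I + 2 - 1 = I + 1 from rfl, B_zero_left, mul_zero, zero_mul, sub_zero]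
    ring

lemma P_rec_main (a k j i : ℕ) (ha : 2 ≤ a) (hk : 2 ≤ k) (hi : 1 ≤ i) (hak : k ≤ a + j) :
    P a k j i = P (a-1) k j i + X ^ (a+k-1) * P (a-1) (k-1) j (i-1)
      + P a (k-1) j i - P (a-1) (k-1) j i := by
  obtain ⟨A, rfl⟩ : ∃ A, a = A + 2 := ⟨a-2, by omega⟩
  obtain ⟨K, rfl⟩ : ∃ K, k = K + 2 := ⟨k-2, by omega⟩
  rcases Nat.lt_or_ge i 2 with hI | hI
  · have : i = 1 := by omega
    subst this
    rw [show (1:ℕ) - 1 = 0 from rfl, P_i_zero, mul_zero, add_zero]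
    unfold P
    simp only [show A + 2 - 1 = A + 1 from rfl, show K + 2 - 1 = K + 1 from rfl,
      show K + 1 - 1 = K from rfl, show (1:ℕ) - 1 = 0 from rfl,
      show A + 2 - 1 + j = A + 1 + j from rfl, B_zero_right, pow_one, one_pow]
    ring
  · obtain ⟨I, rfl⟩ : ∃ I, i = I + 2 := ⟨i-2, by omega⟩
    unfold P
    simp only [show A + 2 - 1 = A + 1 from rfl, show K + 2 - 1 = K + 1 from rfl,
      show K + 1 - 1 = K from rfl, show I + 2 - 1 = I + 1 from rfl,
      show I + 1 - 1 = I from rfl,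
      show A + 2 - 1 + j = A + 1 + j from rfl,
      show A + 2 + (K + 2) - 1 = A + K + 3 by omega,
      show A + 1 + j = A + j + 1 by omega, show A + 2 + j = A + j + 2 by omega]
    have p1 : qBinomAux (A+2) (I+2)
        = qBinomAux (A+1) (I+2) + X ^ (A+1-(I+1)) * qBinomAux (A+1) (I+1) :=
      B_pascal (A+1) (I+1)
    have p2 : qBinomAux (A+j+2) (I+1)
        = qBinomAux (A+j+1) (I+1) + X ^ (A+j+1-I) * qBinomAux (A+j+1) I :=
      B_pascal (A+j+1) I
    have p3 : qBinomAux (K+1) (I+1)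
        = qBinomAux K (I+1) + X ^ (K-I) * qBinomAux K I :=
      B_pascal K I
    have g1 : X ^ ((I+2)^2) * (X ^ (A+1-(I+1)) * qBinomAux (A+1) (I+1)
          * (X ^ (K-I) * qBinomAux K I))
        = X ^ (A+K+3) * (X ^ ((I+1)^2)
          * (qBinomAux (A+1) (I+1) * qBinomAux K I)) := by
      have key := pow_mul_BB ((I+2)^2 + ((A+1-(I+1)) + (K-I))) (A+K+3 + (I+1)^2)
        (A+1) (I+1) K I (by
          intro h1 h2
          have hsq : (I+2)^2 = (I+1)^2 + (2*I+3) := by ring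
          rw [hsq]
          generalize (I+1)^2 = s
          omega)
      calc X ^ ((I+2)^2) * (X ^ (A+1-(I+1)) * qBinomAux (A+1) (I+1)
              * (X ^ (K-I) * qBinomAux K I))
          = X ^ ((I+2)^2 + ((A+1-(I+1)) + (K-I)))
            * (qBinomAux (A+1) (I+1) * qBinomAux K I) := by
            rw [pow_add, pow_add]; ring
        _ = X ^ (A+K+3 + (I+1)^2)
            * (qBinomAux (A+1) (I+1) * qBinomAux K I) := key
        _ = _ := by rw [pow_add]; ring
    rcases Nat.lt_or_ge K j with hjK | hjK
    · have z1 : K + 1 - j = 0 := by omega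
      have z2 : K - j = 0 := by omega
      simp only [z1, z2, B_zero_left, mul_zero, sub_zero]
      rw [p1, p3]
      linear_combination g1
    · have p4 : qBinomAux (K+1-j) (I+2)
          = qBinomAux (K-j) (I+2) + X ^ (K-j-(I+1)) * qBinomAux (K-j) (I+1) := by
        have h := B_pascal (K-j) (I+1)
        rw [show K - j + 1 = K + 1 - j by omega] at h
        exact h
      have g2 : X ^ ((I+2)^2) * (X ^ (A+j+1-I) * qBinomAux (A+j+1) I
            * (X ^ (K-j-(I+1)) * qBinomAux (K-j) (I+1)))
          = X ^ (A+K+3) * (X ^ ((I+1)^2)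
            * (qBinomAux (A+j+1) I * qBinomAux (K-j) (I+1))) := by
        have key := pow_mul_BB ((I+2)^2 + ((A+j+1-I) + (K-j-(I+1)))) (A+K+3 + (I+1)^2)
          (A+j+1) I (K-j) (I+1) (by
            intro h1 h2
            have hsq : (I+2)^2 = (I+1)^2 + (2*I+3) := by ring
            rw [hsq]
            generalize (I+1)^2 = s
            omega)
        calc X ^ ((I+2)^2) * (X ^ (A+j+1-I) * qBinomAux (A+j+1) I
                * (X ^ (K-j-(I+1)) * qBinomAux (K-j) (I+1)))
            = X ^ ((I+2)^2 + ((A+j+1-I) + (K-j-(I+1))))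
              * (qBinomAux (A+j+1) I * qBinomAux (K-j) (I+1)) := by
              rw [pow_add, pow_add]; ring
          _ = X ^ (A+K+3 + (I+1)^2)
              * (qBinomAux (A+j+1) I * qBinomAux (K-j) (I+1)) := key
          _ = _ := by rw [pow_add]; ring
      rw [p1, p2, p3, p4]
      linear_combination g1 - g2

lemma F_ballot_zero {N k j i : ℕ} (hk : 1 ≤ k) (hgt : N - k + j < k) : F N k j i = 0 := by
  unfold F
  have hempty : ((WSet N k j).filter (fun w => (riseSet w).card = i)) = ∅ := by
    rw [Finset.eq_empty_iff_forall_notMem]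
    intro w hw
    simp only [Finset.mem_filter, mem_WSet] at hw
    obtain ⟨⟨h1, h2, h3⟩, h4⟩ := hw
    have hne : (Finset.univ.filter (fun s => w s = true)).Nonempty := by
      apply Finset.card_pos.mp
      show 0 < onesCt w
      omega
    set t := (Finset.univ.filter (fun s => w s = true)).max' hne with htdef
    have htmem := (Finset.univ.filter (fun s => w s = true)).max'_mem hne
    have ht : w t = true := (Finset.mem_filter.mp htmem).2
    have hcT : cntT w t = k := by
      rw [← h1]
      unfold cntT onesCt
      congr 1
      apply Finset.filter_congr
      intro s _
      simp only [and_iff_right_iff_imp]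
      intro hs
      exact Finset.le_max' _ s (by simp [hs])
    have hcF : cntF w t ≤ falsesCt w := by
      apply Finset.card_le_card
      intro s hs
      simp only [Finset.mem_filter] at hs ⊢
      exact ⟨hs.1, hs.2.2⟩
    have hfc := falsesCt_add w
    have := h2 t ht
    omega
  rw [hempty, Finset.sum_empty]

lemma P_ballot_zero (a k j i : ℕ) (heq : k = a + j + 1) : P a k j i = 0 := by
  unfold P
  subst heq
  rw [show a + j + 1 - 1 = a + j from rfl, show a + j - j = a by omega]
  ring

lemma B_one_one : qBinomAux 1 1 = 1 := by
  rw [B_pascal 0 0, show qBinomAux 0 1 = 0 from rfl, B_zero_right]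
  norm_num

lemma F_eq_P : ∀ N a k j i : ℕ, a + k = N → 1 ≤ a → 1 ≤ k → k ≤ a + j → 1 ≤ i →
    F (a+k) k j i = P a k j i := by
  intro N
  induction N using Nat.strong_induction_on with
  | _ N IH =>
    intro a k j i hN ha hk hak hi
    by_cases hbase : a = 1 ∧ k = 1
    · obtain ⟨rfl, rfl⟩ := hbase
      have h1 : F (1+1) 1 j i = E (1+1) 1 j i false + E (1+1) 1 j i true := F_split
      have h2 : E (1+1) 1 j i false = F 1 1 j i := E_false_eq le_rfl
      have h3 : E (1+1) 1 j i true
          = (if 1 ≤ i then X ^ (0+1) * E (0+1) 0 j (i-1) false else 0)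
            + E (0+1) 0 j i true := E_true_eq (M := 0) le_rfl (by omega)
      rw [h1, h2, h3, F_diag le_rfl, E_zero_false, E_zero_true, if_pos hi]
      unfold P
      by_cases hi1 : i = 1
      · subst hi1
        rw [show (1:ℕ)-1 = 0 from rfl, if_pos rfl, B_one_one, B_zero_right, B_zero_right,
          show (1:ℕ)-1-j = 0 by omega, show qBinomAux 0 1 = 0 from rfl]
        norm_num
      · obtain ⟨I, rfl⟩ : ∃ I, i = I + 2 := ⟨i-2, by omega⟩
        rw [show I+2-1 = I+1 from rfl, if_neg (by omega),
          B_eq_zero_of_lt 1 (I+2) (by omega), show (1:ℕ)-1-j = 0 by omega,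
          show qBinomAux 0 (I+2) = 0 from rfl, show (1:ℕ)-1 = 0 from rfl]
        ring
    · obtain ⟨M, hM⟩ : ∃ M, a + k = M + 3 := ⟨a + k - 3, by omega⟩
      have hrec := F_rec (M := M) (k := k) (j := j) (i := i) hk (by omega)
      rcases Nat.lt_or_ge a 2 with hA | hA
      · -- Case A : a = 1, k ≥ 2
        have ha1 : a = 1 := by omega
        subst ha1
        have hkM : k = M + 2 := by omega
        subst hkM
        simp only [show M+2-1 = M+1 from rfl] at hrec
        rw [F_diag (by omega), F_diag (by omega)] at hrec
        have hmid : (if 1 ≤ i then X ^ (M+2) * F (M+1) (M+1) j (i-1) else 0) = 0 := by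
          rw [if_pos hi, F_diag (by omega), mul_zero]
        rw [hmid] at hrec
        have htk : F (M+2) (M+1) j i = P 1 (M+1) j i := by
          have := IH (M+2) (by omega) 1 (M+1) j i (by omega) le_rfl (by omega) (by omega) hi
          rwa [show 1 + (M+1) = M+2 by omega] at this
        rw [htk] at hrec
        rw [show 1 + (M+2) = M+3 by omega,
          P_rec_a1 (M+2) j i (by omega) hi (by omega), show M+2-1 = M+1 from rfl]
        linear_combination hrec
      · rcases Nat.lt_or_ge k 2 with hK | hK
        · -- Case B : k = 1, a ≥ 2
          have hk1 : k = 1 := by omega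
          subst hk1
          have haM : a = M + 2 := by omega
          subst haM
          simp only [show (1:ℕ)-1 = 0 from rfl] at hrec
          rw [F_zero, F_zero, F_zero, if_pos hi] at hrec
          have hta : F (M+2) 1 j i = P (M+1) 1 j i := by
            have := IH (M+2) (by omega) (M+1) 1 j i (by omega) (by omega) le_rfl (by omega) hi
            rwa [show (M+1) + 1 = M+2 by omega] at this
          rw [hta] at hrec
          have hiff : (if i - 1 = 0 then (1:Polynomial ℤ) else 0)
              = (if i = 1 then 1 else 0) := by
            rcases Nat.eq_or_lt_of_le hi with h | h
            · rw [if_pos (by omega), if_pos (by omega)]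
            · rw [if_neg (by omega), if_neg (by omega)]
          rw [hiff] at hrec
          rw [show M + 2 + 1 = M + 3 by omega,
            P_rec_k1 (M+2) j i (by omega) hi, show M+2-1 = M+1 from rfl]
          have hiz : (if i = 0 then (1:Polynomial ℤ) else 0) = 0 := by
            rw [if_neg (by omega)]
          rw [hiz] at hrec
          linear_combination hrec
        · -- Case C : a ≥ 2, k ≥ 2
          have e3 : M + 3 = a + k := by omega
          have e2 : M + 2 = (a-1) + k := by omega
          have e2' : M + 2 = a + (k-1) := by omega
          have e1 : M + 1 = (a-1) + (k-1) := by omega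
          have hta' : F (M+2) k j i = P (a-1) k j i := by
            rw [e2]
            rcases Nat.lt_or_ge k ((a-1) + j + 1) with h | h
            · exact IH ((a-1)+k) (by omega) (a-1) k j i rfl (by omega) hk (by omega) hi
            · rw [F_ballot_zero hk (by omega), P_ballot_zero (a-1) k j i (by omega)]
          have htsub' : F (M+1) (k-1) j i = P (a-1) (k-1) j i := by
            rw [e1]
            exact IH ((a-1)+(k-1)) (by omega) (a-1) (k-1) j i rfl (by omega) (by omega)
              (by omega) hi
          have htk' : F (M+2) (k-1) j i = P a (k-1) j i := by
            rw [e2']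
            exact IH (a+(k-1)) (by omega) a (k-1) j i rfl ha (by omega) (by omega) hi
          have hmid' : F (M+1) (k-1) j (i-1) = P (a-1) (k-1) j (i-1) := by
            rw [e1]
            rcases Nat.eq_or_lt_of_le hi with h | h
            · rw [← h, show (1:ℕ)-1 = 0 from rfl, F_i_zero (by omega), P_i_zero]
            · exact IH ((a-1)+(k-1)) (by omega) (a-1) (k-1) j (i-1) rfl (by omega)
                (by omega) (by omega) (by omega)
          rw [e3, hta', htsub', htk', hmid', if_pos hi] at hrec
          rw [P_rec_main a k j i hA hK hi hak, show a + k - 1 = M + 2 by omega]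
          linear_combination hrec

lemma mem_skewCells {n k j : ℕ} (hkn : k ≤ n) (p : ℕ × ℕ) :
    p ∈ skewCells [n, k] [j] ↔ (p.1 = 0 ∧ j ≤ p.2 ∧ p.2 < n) ∨ (p.1 = 1 ∧ p.2 < k) := by
  obtain ⟨r, c⟩ := p
  unfold skewCells
  rw [Finset.mem_filter, Finset.mem_product, Finset.mem_range, Finset.mem_range]
  have hfold : [n, k].foldr max 0 = max n (max k 0) := rfl
  constructor
  · rintro ⟨⟨h1, h2⟩, h3, h4⟩
    simp only [List.length_cons, List.length_nil] at h1
    interval_cases r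
    · left
      exact ⟨rfl, by simpa using h3, by simpa using h4⟩
    · right
      exact ⟨rfl, by simpa using h4⟩
  · rintro (⟨rfl, h2, h3⟩ | ⟨rfl, h2⟩)
    · exact ⟨⟨by norm_num, by rw [hfold]; omega⟩, by simpa, by simpa⟩
    · exact ⟨⟨by norm_num, by rw [hfold]; omega⟩, by simpa, by simpa⟩

lemma card_skewCells {n k j : ℕ} (hkn : k ≤ n) (hjn : j ≤ n) :
    (skewCells [n, k] [j]).card = (n - j) + k := by
  have hset : skewCells [n, k] [j]
      = ((Finset.Ico j n).map ⟨fun c => ((0:ℕ), c), fun a b h => by simpa using h⟩)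
        ∪ ((Finset.range k).map ⟨fun c => ((1:ℕ), c), fun a b h => by simpa using h⟩) := by
    ext p
    rw [mem_skewCells hkn]
    simp only [Finset.mem_union, Finset.mem_map, Finset.mem_Ico, Finset.mem_range,
      Function.Embedding.coeFn_mk]
    constructor
    · rintro (⟨h1, h2, h3⟩ | ⟨h1, h2⟩)
      · exact Or.inl ⟨p.2, ⟨h2, h3⟩, by rw [← h1]; rfl⟩
      · exact Or.inr ⟨p.2, h2, by rw [← h1]; rfl⟩
    · rintro (⟨c, hc, rfl⟩ | ⟨c, hc, rfl⟩)
      · exact Or.inl ⟨rfl, hc.1, hc.2⟩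
      · exact Or.inr ⟨rfl, hc⟩
  rw [hset, Finset.card_union_of_disjoint, Finset.card_map, Finset.card_map,
    Nat.card_Ico, Finset.card_range]
  rw [Finset.disjoint_left]
  rintro p hp hq
  simp only [Finset.mem_map, Function.Embedding.coeFn_mk] at hp hq
  obtain ⟨c, -, rfl⟩ := hp
  obtain ⟨c', -, h⟩ := hq
  exact absurd (congrArg Prod.fst h) Nat.one_ne_zero

def colOf {N : ℕ} (w : Fin N → Bool) (t : Fin N) : ℕ :=
  (Finset.univ.filter (fun s => s < t ∧ w s = w t)).card

lemma colOf_strictMono {N : ℕ} {w : Fin N → Bool} {s t : Fin N} (hst : s < t)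
    (hw : w s = w t) : colOf w s < colOf w t := by
  have hnot : s ∉ Finset.univ.filter (fun u => u < s ∧ w u = w s) := by simp
  have hsub : insert s (Finset.univ.filter (fun u => u < s ∧ w u = w s))
      ⊆ Finset.univ.filter (fun u => u < t ∧ w u = w t) := by
    intro u hu
    rcases Finset.mem_insert.mp hu with rfl | hu
    · simp [hst, hw]
    · simp only [Finset.mem_filter, Finset.mem_univ, true_and] at hu ⊢
      exact ⟨lt_trans hu.1 hst, hu.2.trans hw⟩
  have := Finset.card_le_card hsub
  rw [Finset.card_insert_of_notMem hnot] at this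
  unfold colOf
  omega

lemma cnt_colOf {N : ℕ} (w : Fin N → Bool) (t : Fin N) :
    (Finset.univ.filter (fun s => s ≤ t ∧ w s = w t)).card = colOf w t + 1 := by
  have h : Finset.univ.filter (fun s => s ≤ t ∧ w s = w t)
      = insert t (Finset.univ.filter (fun s => s < t ∧ w s = w t)) := by
    ext s
    simp only [Finset.mem_filter, Finset.mem_univ, true_and, Finset.mem_insert]
    constructor
    · rintro ⟨h1, h2⟩
      rcases eq_or_lt_of_le h1 with rfl | h1
      · exact Or.inl rfl
      · exact Or.inr ⟨h1, h2⟩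
    · rintro (rfl | ⟨h1, h2⟩)
      · exact ⟨le_refl _, rfl⟩
      · exact ⟨le_of_lt h1, h2⟩
  rw [h, Finset.card_insert_of_notMem (by simp)]
  rfl

lemma cntT_eq_colOf {N : ℕ} {w : Fin N → Bool} {t : Fin N} (ht : w t = true) :
    cntT w t = colOf w t + 1 := by
  rw [← cnt_colOf]
  unfold cntT
  congr 1
  apply Finset.filter_congr
  intro s _
  rw [ht]

lemma cntF_eq_colOf {N : ℕ} {w : Fin N → Bool} {t : Fin N} (ht : w t = false) :
    cntF w t = colOf w t + 1 := by
  rw [← cnt_colOf]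
  unfold cntF
  congr 1
  apply Finset.filter_congr
  intro s _
  rw [ht]

lemma colOf_lt_onesCt {N : ℕ} {w : Fin N → Bool} {t : Fin N} (ht : w t = true) :
    colOf w t + 1 ≤ onesCt w := by
  rw [← cntT_eq_colOf ht]
  apply Finset.card_le_card
  intro s hs
  simp only [Finset.mem_filter, Finset.mem_univ, true_and] at hs ⊢
  exact hs.2

lemma colOf_lt_falsesCt {N : ℕ} {w : Fin N → Bool} {t : Fin N} (ht : w t = false) :
    colOf w t + 1 ≤ falsesCt w := by
  rw [← cntF_eq_colOf ht]
  apply Finset.card_le_card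
  intro s hs
  simp only [Finset.mem_filter, Finset.mem_univ, true_and] at hs ⊢
  exact hs.2

lemma cntF_mono {N : ℕ} (w : Fin N → Bool) {s t : Fin N} (hst : s ≤ t) :
    cntF w s ≤ cntF w t := by
  apply Finset.card_le_card
  intro u hu
  simp only [Finset.mem_filter, Finset.mem_univ, true_and] at hu ⊢
  exact ⟨le_trans hu.1 hst, hu.2⟩

lemma cntF_le_colOf {N : ℕ} {w : Fin N → Bool} {b a : Fin N} (hba : b < a)
    (ha : w a = false) : cntF w b ≤ colOf w a := by
  apply Finset.card_le_card
  intro u hu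
  simp only [Finset.mem_filter, Finset.mem_univ, true_and] at hu ⊢
  exact ⟨lt_of_le_of_lt hu.1 hba, by rw [hu.2, ha]⟩

lemma card_filter_lt_fin {m : ℕ} (x : Fin m) :
    (Finset.univ.filter (fun y : Fin m => y < x)).card = (x : ℕ) := by
  rw [← Finset.card_range (x : ℕ)]
  refine Finset.card_nbij (s := Finset.univ.filter (fun y : Fin m => y < x))
    (t := Finset.range (x : ℕ)) (fun y => (y : ℕ)) ?_ ?_ ?_
  · intro y hy
    simp only [Finset.mem_coe, Finset.mem_filter, Finset.mem_univ, true_and] at hy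
    simp only [Finset.mem_coe, Finset.mem_range]
    exact hy
  · intro y _ z _ h
    exact Fin.ext h
  · intro c hc
    simp only [Finset.coe_range, Set.mem_Iio] at hc
    have hcm : c < m := lt_trans hc x.isLt
    refine ⟨⟨c, hcm⟩, ?_, rfl⟩
    simp only [Finset.coe_filter, Set.mem_setOf_eq, Finset.mem_univ, true_and]
    exact hc

lemma pos_bijective {n k j : ℕ}
    {pos : Fin (skewCells [n,k] [j]).card → ↥(skewCells [n,k] [j])}
    (hpos : IsSYT [n,k] [j] pos) : Function.Bijective pos :=
  (Fintype.bijective_iff_injective_and_card pos).mpr ⟨hpos.1, by simp [Fintype.card_coe]⟩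

lemma card_row_filter {n k j : ℕ}
    {pos : Fin (skewCells [n,k] [j]).card → ↥(skewCells [n,k] [j])}
    (hpos : IsSYT [n,k] [j] pos) (r lo hi : ℕ)
    (hforward : ∀ p : ℕ × ℕ, p ∈ skewCells [n,k] [j] → p.1 = r → lo ≤ p.2 ∧ p.2 < hi)
    (hback : ∀ c, lo ≤ c → c < hi → (r, c) ∈ skewCells [n,k] [j]) :
    (Finset.univ.filter (fun s => (↑(pos s) : ℕ × ℕ).1 = r)).card = hi - lo := by
  rw [← Nat.card_Ico lo hi]
  refine Finset.card_bij' (fun s _ => (↑(pos s) : ℕ × ℕ).2)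
    (fun c hc => ((pos_bijective hpos).2
      ⟨(r, c), hback c (Finset.mem_Ico.mp hc).1 (Finset.mem_Ico.mp hc).2⟩).choose)
    ?_ ?_ ?_ ?_
  · intro s hs
    simp only [Finset.mem_filter, Finset.mem_univ, true_and] at hs
    exact Finset.mem_Ico.mpr (hforward _ (pos s).2 hs)
  · intro c hc
    have hspec := ((pos_bijective hpos).2
      ⟨(r, c), hback c (Finset.mem_Ico.mp hc).1 (Finset.mem_Ico.mp hc).2⟩).choose_spec
    simp only [Finset.mem_filter, Finset.mem_univ, true_and]
    rw [hspec]
  · intro s hs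
    simp only [Finset.mem_filter, Finset.mem_univ, true_and] at hs
    apply hpos.1
    have hspec := ((pos_bijective hpos).2
      ⟨(r, (↑(pos s) : ℕ × ℕ).2), hback _ (hforward _ (pos s).2 hs).1
        (hforward _ (pos s).2 hs).2⟩).choose_spec
    rw [hspec]
    apply Subtype.ext
    apply Prod.ext
    · exact hs.symm
    · rfl
  · intro c hc
    have hspec := ((pos_bijective hpos).2
      ⟨(r, c), hback c (Finset.mem_Ico.mp hc).1 (Finset.mem_Ico.mp hc).2⟩).choose_spec
    exact congrArg (fun q : ↥(skewCells [n,k] [j]) => (↑q : ℕ × ℕ).2) hspec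

lemma col_formula_aux {n k j : ℕ}
    {pos : Fin (skewCells [n,k] [j]).card → ↥(skewCells [n,k] [j])}
    (hpos : IsSYT [n,k] [j] pos) (r lo hi : ℕ)
    (hforward : ∀ p : ℕ × ℕ, p ∈ skewCells [n,k] [j] → p.1 = r → lo ≤ p.2 ∧ p.2 < hi)
    (hback : ∀ c, lo ≤ c → c < hi → (r, c) ∈ skewCells [n,k] [j])
    {t : Fin (skewCells [n,k] [j]).card} (ht : (↑(pos t) : ℕ × ℕ).1 = r) :
    (↑(pos t) : ℕ × ℕ).2
      = lo + (Finset.univ.filter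
          (fun s => s < t ∧ (↑(pos s) : ℕ × ℕ).1 = r)).card := by
  classical
  set T := Finset.univ.filter (fun s => (↑(pos s) : ℕ × ℕ).1 = r) with hT
  set m := T.card with hm
  have hmem_e : ∀ x : Fin m, T.orderEmbOfFin rfl x ∈ T :=
    fun x => Finset.orderEmbOfFin_mem T rfl x
  have hrow_e : ∀ x : Fin m, (↑(pos (T.orderEmbOfFin rfl x)) : ℕ × ℕ).1 = r :=
    fun x => (Finset.mem_filter.mp (hmem_e x)).2
  set f : Fin m → ℕ := fun x => (↑(pos (T.orderEmbOfFin rfl x)) : ℕ × ℕ).2 with hf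
  have hf_mono : StrictMono f := by
    intro x y hxy
    have hxy' : T.orderEmbOfFin rfl x < T.orderEmbOfFin rfl y :=
      (T.orderEmbOfFin rfl).strictMono hxy
    rcases lt_trichotomy (f x) (f y) with h | h | h
    · exact h
    · exfalso
      have hval : pos (T.orderEmbOfFin rfl x) = pos (T.orderEmbOfFin rfl y) := by
        apply Subtype.ext
        apply Prod.ext
        · rw [hrow_e x, hrow_e y]
        · exact h
      exact absurd (hpos.1 hval) (ne_of_lt hxy')
    · exfalso
      have h2 := hpos.2.1 (T.orderEmbOfFin rfl y) (T.orderEmbOfFin rfl x)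
        (by rw [hrow_e x, hrow_e y]) h
      exact absurd h2 (not_lt.mpr (le_of_lt hxy'))
  have hf_mem : ∀ x : Fin m, f x ∈ Finset.Ico lo hi := fun x =>
    Finset.mem_Ico.mpr (hforward _ (pos (T.orderEmbOfFin rfl x)).2 (hrow_e x))
  have hD : (Finset.Ico lo hi).card = m := by
    rw [Nat.card_Ico, hm, hT]
    exact (card_row_filter hpos r lo hi hforward hback).symm
  have huniq : f = ⇑((Finset.Ico lo hi).orderEmbOfFin hD) :=
    Finset.orderEmbOfFin_unique hD hf_mem hf_mono
  have hIco : ∀ x : Fin m, ((Finset.Ico lo hi).orderEmbOfFin hD) x = lo + x := by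
    have hcard2 : hi - lo = m := by rw [← Nat.card_Ico lo hi, hD]
    have hmem2 : ∀ x : Fin m, lo + (x : ℕ) ∈ Finset.Ico lo hi := by
      intro x
      have hx := x.isLt
      exact Finset.mem_Ico.mpr ⟨by omega, by omega⟩
    have hmono2 : StrictMono (fun x : Fin m => lo + (x : ℕ)) := by
      intro x y hxy
      show lo + (x : ℕ) < lo + (y : ℕ)
      have : (x : ℕ) < y := hxy
      omega
    have huniq2 := Finset.orderEmbOfFin_unique hD hmem2 hmono2
    intro x
    exact (congrFun huniq2 x).symm
  obtain ⟨x, hx⟩ : ∃ x : Fin m, T.orderEmbOfFin rfl x = t := by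
    have htT : t ∈ T := Finset.mem_filter.mpr ⟨Finset.mem_univ _, ht⟩
    have : t ∈ Set.range ⇑(T.orderEmbOfFin (rfl : T.card = m)) := by
      rw [Finset.range_orderEmbOfFin]; exact htT
    exact this
  have hcol : (↑(pos t) : ℕ × ℕ).2 = lo + x := by
    rw [← hx]
    exact (congrFun huniq x).trans (hIco x)
  have hcount : (Finset.univ.filter
      (fun s => s < t ∧ (↑(pos s) : ℕ × ℕ).1 = r)).card = (x : ℕ) := by
    have hset : Finset.univ.filter (fun s => s < t ∧ (↑(pos s) : ℕ × ℕ).1 = r)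
        = (Finset.univ.filter (fun y : Fin m => y < x)).map
            ⟨⇑(T.orderEmbOfFin (rfl : T.card = m)), (T.orderEmbOfFin rfl).injective⟩ := by
      ext s
      simp only [Finset.mem_filter, Finset.mem_univ, true_and, Finset.mem_map,
        Function.Embedding.coeFn_mk]
      constructor
      · rintro ⟨hst, hsr⟩
        have hsT : s ∈ T := Finset.mem_filter.mpr ⟨Finset.mem_univ _, hsr⟩
        have hs' : s ∈ Set.range ⇑(T.orderEmbOfFin (rfl : T.card = m)) := by
          rw [Finset.range_orderEmbOfFin]; exact hsT
        obtain ⟨y, hy⟩ := hs'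
        refine ⟨y, ?_, hy⟩
        rw [← (T.orderEmbOfFin (rfl : T.card = m)).lt_iff_lt, hy, hx]
        exact hst
      · rintro ⟨y, hyx, rfl⟩
        refine ⟨?_, hrow_e y⟩
        rw [← hx]
        exact (T.orderEmbOfFin rfl).strictMono hyx
    rw [hset, Finset.card_map, card_filter_lt_fin x]
  rw [hcol, hcount]

def toWord {n k j : ℕ} (pos : Fin (skewCells [n,k] [j]).card → ↥(skewCells [n,k] [j]))
    (t : Fin (skewCells [n,k] [j]).card) : Bool :=
  decide ((↑(pos t) : ℕ × ℕ).1 = 1)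

def toPos {n k j : ℕ} (w : Fin (skewCells [n,k] [j]).card → Bool)
    (t : Fin (skewCells [n,k] [j]).card) : ↥(skewCells [n,k] [j]) :=
  if h : (if w t then ((1:ℕ), colOf w t) else ((0:ℕ), j + colOf w t)) ∈ skewCells [n,k] [j]
  then ⟨_, h⟩
  else ⟨(Finset.card_pos.mp t.pos).choose, (Finset.card_pos.mp t.pos).choose_spec⟩

lemma row01 {n k j : ℕ} (hkn : k ≤ n) {p : ℕ × ℕ} (hp : p ∈ skewCells [n,k] [j]) :
    p.1 = 0 ∨ p.1 = 1 := by
  rcases (mem_skewCells hkn p).mp hp with ⟨h, -⟩ | ⟨h, -⟩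
  · exact Or.inl h
  · exact Or.inr h

lemma colOf_toWord {n k j : ℕ} (hkn : k ≤ n)
    (pos : Fin (skewCells [n,k] [j]).card → ↥(skewCells [n,k] [j]))
    (t : Fin (skewCells [n,k] [j]).card) :
    colOf (toWord pos) t
      = (Finset.univ.filter
          (fun s => s < t ∧ (↑(pos s) : ℕ × ℕ).1 = (↑(pos t) : ℕ × ℕ).1)).card := by
  unfold colOf
  congr 1
  apply Finset.filter_congr
  intro s _
  refine and_congr_right (fun _ => ?_)
  have hs01 := row01 hkn (pos s).2
  have ht01 := row01 hkn (pos t).2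
  unfold toWord
  rcases hs01 with h | h <;> rcases ht01 with h' | h' <;> simp [h, h']

lemma hforward0 {n k j : ℕ} (hkn : k ≤ n) :
    ∀ p : ℕ × ℕ, p ∈ skewCells [n,k] [j] → p.1 = 0 → j ≤ p.2 ∧ p.2 < n := by
  intro p hp h0
  rcases (mem_skewCells hkn p).mp hp with ⟨-, h⟩ | ⟨h1, -⟩
  · exact h
  · omega

lemma hforward1 {n k j : ℕ} (hkn : k ≤ n) :
    ∀ p : ℕ × ℕ, p ∈ skewCells [n,k] [j] → p.1 = 1 → 0 ≤ p.2 ∧ p.2 < k := by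
  intro p hp h1
  rcases (mem_skewCells hkn p).mp hp with ⟨h0, -⟩ | ⟨-, h⟩
  · omega
  · exact ⟨Nat.zero_le _, h⟩

lemma hback0 {n k j : ℕ} (hkn : k ≤ n) :
    ∀ c, j ≤ c → c < n → ((0:ℕ), c) ∈ skewCells [n,k] [j] := by
  intro c h1 h2
  exact (mem_skewCells hkn _).mpr (Or.inl ⟨rfl, h1, h2⟩)

lemma hback1 {n k j : ℕ} (hkn : k ≤ n) :
    ∀ c, 0 ≤ c → c < k → ((1:ℕ), c) ∈ skewCells [n,k] [j] := by
  intro c _ h2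
  exact (mem_skewCells hkn _).mpr (Or.inr ⟨rfl, h2⟩)

lemma col_formula {n k j : ℕ} (hkn : k ≤ n)
    {pos : Fin (skewCells [n,k] [j]).card → ↥(skewCells [n,k] [j])}
    (hpos : IsSYT [n,k] [j] pos) (t : Fin (skewCells [n,k] [j]).card) :
    (↑(pos t) : ℕ × ℕ).2
      = (if (↑(pos t) : ℕ × ℕ).1 = 1 then 0 else j) + colOf (toWord pos) t := by
  by_cases hr : (↑(pos t) : ℕ × ℕ).1 = 1
  · rw [if_pos hr, col_formula_aux hpos 1 0 k (hforward1 hkn) (hback1 hkn) hr,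
      colOf_toWord hkn, hr]
  · have hr0 : (↑(pos t) : ℕ × ℕ).1 = 0 := (row01 hkn (pos t).2).resolve_right hr
    rw [if_neg hr, col_formula_aux hpos 0 j n (hforward0 hkn) (hback0 hkn) hr0,
      colOf_toWord hkn, hr0]

lemma onesCt_toWord {n k j : ℕ} (hkn : k ≤ n)
    {pos : Fin (skewCells [n,k] [j]).card → ↥(skewCells [n,k] [j])}
    (hpos : IsSYT [n,k] [j] pos) : onesCt (toWord pos) = k := by
  unfold onesCt
  have h : Finset.univ.filter (fun s => toWord pos s = true)
      = Finset.univ.filter (fun s => (↑(pos s) : ℕ × ℕ).1 = 1) := by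
    apply Finset.filter_congr
    intro s _
    unfold toWord
    simp
  rw [h, card_row_filter hpos 1 0 k (hforward1 hkn) (hback1 hkn)]
  omega

lemma toWord_mem_WSet {n k j : ℕ} (hkn : k ≤ n)
    {pos : Fin (skewCells [n,k] [j]).card → ↥(skewCells [n,k] [j])}
    (hpos : IsSYT [n,k] [j] pos)
    (hfirst : ∀ a : Fin (skewCells [n,k] [j]).card, (a : ℕ) = 0 →
      (↑(pos a) : ℕ × ℕ).1 = 0) :
    toWord pos ∈ WSet (skewCells [n,k] [j]).card k j := by
  rw [mem_WSet]
  refine ⟨onesCt_toWord hkn hpos, ?_, ?_⟩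
  · intro t ht
    have hrt : (↑(pos t) : ℕ × ℕ).1 = 1 := by
      unfold toWord at ht
      exact of_decide_eq_true ht
    set c := (↑(pos t) : ℕ × ℕ).2 with hc
    have hcol : c = colOf (toWord pos) t := by
      have := col_formula hkn hpos t
      rw [if_pos hrt] at this
      simpa using this
    have hcntT : cntT (toWord pos) t = c + 1 := by
      rw [cntT_eq_colOf ht, ← hcol]
    rcases Nat.lt_or_ge c j with hcj | hcj
    · omega
    · have hck : c < k := ((hforward1 hkn) _ (pos t).2 hrt).2
      have hcell0 : ((0:ℕ), c) ∈ skewCells [n,k] [j] := hback0 hkn c hcj (by omega)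
      obtain ⟨s, hs⟩ := (pos_bijective hpos).2 ⟨((0:ℕ), c), hcell0⟩
      have hrows : (↑(pos s) : ℕ × ℕ).1 = 0 := by rw [hs]
      have hcols : (↑(pos s) : ℕ × ℕ).2 = c := by rw [hs]
      have hst : s < t := by
        apply hpos.2.2 s t
        · rw [hcols]
        · rw [hrows, hrt]; omega
      have hws : toWord pos s = false := by
        unfold toWord
        rw [hrows]
        simp
      have hcolOfs : colOf (toWord pos) s = c - j := by
        have := col_formula hkn hpos s
        rw [if_neg (by rw [hrows]; omega), hcols] at this
        omega
      have hcntFs : cntF (toWord pos) s = (c - j) + 1 := by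
        rw [cntF_eq_colOf hws, hcolOfs]
      have hmono := cntF_mono (toWord pos) (le_of_lt hst)
      omega
  · intro t ht0
    unfold toWord
    rw [hfirst t ht0]
    simp

lemma desSet_eq_riseSet {n k j : ℕ} (hkn : k ≤ n)
    (pos : Fin (skewCells [n,k] [j]).card → ↥(skewCells [n,k] [j])) :
    desSet [n,k] [j] pos = riseSet (toWord pos) := by
  ext v
  unfold desSet riseSet
  simp only [Finset.mem_filter, Finset.mem_range]
  refine and_congr_right (fun _ => ?_)
  constructor
  · rintro ⟨a, b, ha, hb, hab⟩
    have ha01 := row01 hkn (pos a).2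
    have hb01 := row01 hkn (pos b).2
    refine ⟨a, b, ha, hb, ?_, ?_⟩
    · unfold toWord
      have : (↑(pos a) : ℕ × ℕ).1 = 0 := by omega
      rw [this]; simp
    · unfold toWord
      have : (↑(pos b) : ℕ × ℕ).1 = 1 := by omega
      rw [this]; simp
  · rintro ⟨a, b, ha, hb, hwa, hwb⟩
    have ha01 := row01 hkn (pos a).2
    have hb01 := row01 hkn (pos b).2
    refine ⟨a, b, ha, hb, ?_⟩
    unfold toWord at hwa hwb
    have h1 : (↑(pos a) : ℕ × ℕ).1 = 0 := by
      rcases ha01 with h | h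
      · exact h
      · rw [h] at hwa; simp at hwa
    have h2 : (↑(pos b) : ℕ × ℕ).1 = 1 := of_decide_eq_true hwb
    omega

lemma iteF {α : Sort _} (x y : α) : (if (false : Bool) = true then x else y) = y := by simp

lemma iteT {α : Sort _} (x y : α) : (if (true : Bool) = true then x else y) = x := by simp

lemma toPos_val {n k j : ℕ} (hkn : k ≤ n) (hjn : j ≤ n)
    {w : Fin (skewCells [n,k] [j]).card → Bool}
    (hw : w ∈ WSet (skewCells [n,k] [j]).card k j) (t : Fin (skewCells [n,k] [j]).card) :
    (↑(toPos w t) : ℕ × ℕ)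
      = if w t then ((1:ℕ), colOf w t) else ((0:ℕ), j + colOf w t) := by
  rw [mem_WSet] at hw
  obtain ⟨h1, h2, h3⟩ := hw
  have hcard := card_skewCells (n := n) (k := k) (j := j) hkn hjn
  have hfc := falsesCt_add w
  have hmem : (if w t then ((1:ℕ), colOf w t) else ((0:ℕ), j + colOf w t))
      ∈ skewCells [n,k] [j] := by
    cases hb : w t
    · rw [iteF]
      apply (mem_skewCells hkn _).mpr
      refine Or.inl ⟨rfl, by omega, ?_⟩
      have := colOf_lt_falsesCt hb
      simp only
      omega
    · rw [iteT]
      apply (mem_skewCells hkn _).mpr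
      refine Or.inr ⟨rfl, ?_⟩
      have := colOf_lt_onesCt hb
      simp only
      omega
  unfold toPos
  rw [dif_pos hmem]

lemma toWord_toPos {n k j : ℕ} (hkn : k ≤ n) (hjn : j ≤ n)
    {w : Fin (skewCells [n,k] [j]).card → Bool}
    (hw : w ∈ WSet (skewCells [n,k] [j]).card k j) :
    toWord (toPos w) = w := by
  funext t
  unfold toWord
  rw [toPos_val hkn hjn hw t]
  cases hb : w t
  · rw [iteF]
    simp
  · rw [iteT]
    simp

lemma colOf_inj {N : ℕ} {w : Fin N → Bool} {s t : Fin N} (hw : w s = w t)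
    (h : colOf w s = colOf w t) : s = t := by
  rcases lt_trichotomy s t with hst | hst | hst
  · exact absurd (colOf_strictMono hst hw) (by omega)
  · exact hst
  · exact absurd (colOf_strictMono hst hw.symm) (by omega)

lemma toPos_isSYT {n k j : ℕ} (hkn : k ≤ n) (hjn : j ≤ n)
    {w : Fin (skewCells [n,k] [j]).card → Bool}
    (hw : w ∈ WSet (skewCells [n,k] [j]).card k j) :
    IsSYT [n,k] [j] (toPos w) := by
  have hval := toPos_val hkn hjn hw
  have hballot : Ballot j w := ((mem_WSet w).mp hw).2.1
  refine ⟨?_, ?_, ?_⟩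
  · intro s t h
    have hv : (↑(toPos w s) : ℕ × ℕ) = (↑(toPos w t) : ℕ × ℕ) := by rw [h]
    rw [hval s, hval t] at hv
    cases hbs : w s <;> cases hbt : w t <;> rw [hbs, hbt] at hv
    · rw [iteF, iteF] at hv
      have hcol : j + colOf w s = j + colOf w t := congrArg Prod.snd hv
      exact colOf_inj (w := w) (by rw [hbs, hbt]) (by omega)
    · rw [iteF, iteT] at hv
      have h0 : (0:ℕ) = 1 := congrArg Prod.fst hv
      exact absurd h0 (by norm_num)
    · rw [iteT, iteF] at hv
      have h0 : (1:ℕ) = 0 := congrArg Prod.fst hv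
      exact absurd h0 (by norm_num)
    · rw [iteT, iteT] at hv
      have hcol : colOf w s = colOf w t := congrArg Prod.snd hv
      exact colOf_inj (w := w) (by rw [hbs, hbt]) (by omega)
  · intro a b h1 h2
    rw [hval a, hval b] at h1 h2
    cases hba : w a <;> cases hbb : w b <;> rw [hba, hbb] at h1 h2
    · rw [iteF, iteF] at h1 h2
      have h2' : j + colOf w a < j + colOf w b := h2
      have hcol : colOf w a < colOf w b := by omega
      rcases lt_trichotomy a b with h | h | h
      · exact h
      · exfalso; subst h; omega
      · exact absurd (colOf_strictMono h (hbb.trans hba.symm)) (by omega)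
    · rw [iteF, iteT] at h1
      have h1' : (0:ℕ) = 1 := h1
      exact absurd h1' (by norm_num)
    · rw [iteT, iteF] at h1
      have h1' : (1:ℕ) = 0 := h1
      exact absurd h1' (by norm_num)
    · rw [iteT, iteT] at h1 h2
      have hcol : colOf w a < colOf w b := h2
      rcases lt_trichotomy a b with h | h | h
      · exact h
      · exfalso; subst h; omega
      · exact absurd (colOf_strictMono h (hbb.trans hba.symm)) (by omega)
  · intro a b h1 h2
    rw [hval a, hval b] at h1 h2
    cases hba : w a <;> cases hbb : w b <;> rw [hba, hbb] at h1 h2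
    · rw [iteF, iteF] at h2
      have h2' : (0:ℕ) < 0 := h2
      exact absurd h2' (by norm_num)
    · rw [iteF, iteT] at h1 h2
      have h1' : j + colOf w a = colOf w b := h1
      rcases lt_trichotomy a b with h | h | h
      · exact h
      · exfalso; subst h; rw [hba] at hbb; exact absurd hbb (by simp)
      · exfalso
        have hcntT : cntT w b = colOf w b + 1 := cntT_eq_colOf hbb
        have hcntF : cntF w b ≤ colOf w a := cntF_le_colOf h hba
        have := hballot b hbb
        omega
    · rw [iteT, iteF] at h2
      have h2' : (1:ℕ) < 0 := h2
      exact absurd h2' (by norm_num)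
    · rw [iteT, iteT] at h2
      have h2' : (1:ℕ) < 1 := h2
      exact absurd h2' (by norm_num)

lemma fStar_eq_F (n k j i : ℕ) (hkn : k ≤ n) (hjn : j ≤ n) :
    fStar n k j i = F ((skewCells [n,k] [j]).card) k j i := by
  unfold fStar F
  refine Finset.sum_nbij' (fun pos => toWord pos) (fun w => toPos w) ?_ ?_ ?_ ?_ ?_
  · intro pos hpos'
    simp only [Finset.mem_filter, SYTs, Finset.mem_univ, true_and] at hpos'
    obtain ⟨hsyt, hdes, hfirst⟩ := hpos'
    rw [Finset.mem_filter]
    refine ⟨toWord_mem_WSet hkn hsyt hfirst, ?_⟩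
    rw [← desSet_eq_riseSet hkn pos]
    exact hdes
  · intro w hw'
    simp only [Finset.mem_filter, mem_WSet] at hw'
    obtain ⟨hw, hrise⟩ := hw'
    have hwmem : w ∈ WSet (skewCells [n,k] [j]).card k j := (mem_WSet w).mpr hw
    simp only [Finset.mem_filter, SYTs, Finset.mem_univ, true_and]
    refine ⟨toPos_isSYT hkn hjn hwmem, ?_, ?_⟩
    · show (desSet [n,k] [j] (toPos w)).card = i
      rw [desSet_eq_riseSet hkn (toPos w), toWord_toPos hkn hjn hwmem]
      exact hrise
    · intro a ha
      rw [toPos_val hkn hjn hwmem a, if_neg (by rw [hw.2.2 a ha]; simp)]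
  · intro pos hpos'
    simp only [Finset.mem_filter, SYTs, Finset.mem_univ, true_and] at hpos'
    obtain ⟨hsyt, hdes, hfirst⟩ := hpos'
    have hwmem := toWord_mem_WSet hkn hsyt hfirst
    funext t
    apply Subtype.ext
    rw [toPos_val hkn hjn hwmem t]
    by_cases hr : (↑(pos t) : ℕ × ℕ).1 = 1
    · rw [if_pos (by unfold toWord; simp [hr])]
      have hcol := col_formula hkn hsyt t
      rw [if_pos hr] at hcol
      apply Prod.ext
      · exact hr.symm
      · simp only
        omega
    · have hr0 : (↑(pos t) : ℕ × ℕ).1 = 0 := (row01 hkn (pos t).2).resolve_right hr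
      rw [if_neg (by unfold toWord; simp [hr])]
      have hcol := col_formula hkn hsyt t
      rw [if_neg hr] at hcol
      apply Prod.ext
      · exact hr0.symm
      · simp only
        omega
  · intro w hw'
    simp only [Finset.mem_filter, mem_WSet] at hw'
    exact toWord_toPos hkn hjn ((mem_WSet w).mpr hw'.1)
  · intro pos hpos'
    show X ^ (desSet [n,k] [j] pos).sum id = _
    rw [desSet_eq_riseSet hkn pos]

lemma qBinom_nat (M N : ℕ) : qBinom (M : ℤ) (N : ℤ) = qBinomAux M N := by
  unfold qBinom
  rcases le_or_gt N M with h | h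
  · rw [if_pos ⟨Int.ofNat_nonneg N, by exact_mod_cast h⟩]
    simp [Int.toNat_natCast]
  · rw [if_neg (by push_cast; omega)]
    exact (B_eq_zero_of_lt M N h).symm

end SkewAux


/-- For integers `n ≥ k > 0`, `0 ≤ j < n`, `i ≥ 1`,
`f*_{(n,k)∖(j),i}(q) = q^{i²} ([n-j choose i]_q [k-1 choose i-1]_q
  - [n choose i-1]_q [k-j-1 choose i]_q)`. -/
theorem stmt8 (n k j i : ℕ) (hk : 0 < k) (hkn : k ≤ n) (hj : j < n) (hi : 1 ≤ i) :
    fStar n k j i =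
      X ^ (i ^ 2) *
        (qBinom ((n : ℤ) - j) i * qBinom ((k : ℤ) - 1) ((i : ℤ) - 1) -
          qBinom n ((i : ℤ) - 1) * qBinom ((k : ℤ) - j - 1) i) := by
  have hjn : j ≤ n := le_of_lt hj
  rw [SkewAux.fStar_eq_F n k j i hkn hjn, SkewAux.card_skewCells hkn hjn,
    SkewAux.F_eq_P ((n-j)+k) (n-j) k j i rfl (by omega) hk (by omega) hi]
  unfold SkewAux.P
  have b1 : qBinom ((n : ℤ) - j) i = qBinomAux (n - j) i := by
    rw [show (n : ℤ) - j = ((n - j : ℕ) : ℤ) by omega, SkewAux.qBinom_nat]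
  have b2 : qBinom ((k : ℤ) - 1) ((i : ℤ) - 1) = qBinomAux (k - 1) (i - 1) := by
    rw [show (k : ℤ) - 1 = ((k - 1 : ℕ) : ℤ) by omega,
        show (i : ℤ) - 1 = ((i - 1 : ℕ) : ℤ) by omega, SkewAux.qBinom_nat]
  have b3 : qBinom (n : ℤ) ((i : ℤ) - 1) = qBinomAux n (i - 1) := by
    rw [show (i : ℤ) - 1 = ((i - 1 : ℕ) : ℤ) by omega, SkewAux.qBinom_nat]
  have b4 : qBinom ((k : ℤ) - j - 1) i = qBinomAux (k - 1 - j) i := by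
    rcases Nat.lt_or_ge j k with h | h
    · rw [show (k : ℤ) - j - 1 = ((k - 1 - j : ℕ) : ℤ) by omega, SkewAux.qBinom_nat]
    · have hz : k - 1 - j = 0 := by omega
      rw [hz]
      obtain ⟨I, rfl⟩ : ∃ I, i = I + 1 := ⟨i - 1, by omega⟩
      rw [SkewAux.B_zero_left]
      unfold qBinom
      rw [if_neg (by push_cast; omega)]
  rw [b1, b2, b3, b4, show n - j + j = n by omega]
end
end

section
/- Let n, k, j, i be integers with n > k > 0, 0 ≤ j < n and i > 1, and let f*_{(n,k)∖(j),i}(q) denote the distribution of the major index over standard Young tableaux of skew shape (n,k)∖(j) with exactly i descents in which the entry 1 lies in the first (top) row. Then f*_{(n,k)∖(j),i}(q) = f*_{(n−1,k)∖(j),i}(q) + Σ_{ℓ=1}^{k−1} q^{n−j+k−ℓ}·f*_{(n−1,k−ℓ)∖(j),i−1}(q). -/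
open Polynomial
open scoped Classical

noncomputable section

/-!
A tableau of shape `(n,k)∖(j)` is determined by the set `T` of indices `a` (entry `a + 1`) lying
in the second row: each row is filled left to right, and the columns increase exactly when `T`
satisfies a ballot condition. A descent is then an element `t ∈ T` with `t - 1 ∉ T`, and the
entry `1` lies in the first row iff `0 ∉ T`.

Sort the ballot sets by the length `ℓ` of the final run of second-row entries. Deleting this run
together with the last first-row entry before it leaves a ballot set of shape `(n-1,k-ℓ)∖(j)`;
for `ℓ ≥ 1` this deletes exactly one descent, at `n-j+k-ℓ`. The run cannot be the whole second
row, since that tableau has only one descent.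
-/

open Finset Nat

namespace Nat

lemma count_add_count_not (p : ℕ → Prop) [DecidablePred p] (n : ℕ) :
    count p n + count (fun m => ¬p m) n = n := by
  simp only [count_eq_card_filter_range, card_filter_add_card_filter_not, card_range]

lemma count_congr_of_lt {p q : ℕ → Prop} [DecidablePred p] [DecidablePred q] {n : ℕ}
    (h : ∀ m < n, (p m ↔ q m)) : count p n = count q n :=
  le_antisymm (count_mono_left fun m hm => (h m hm).1) (count_mono_left fun m hm => (h m hm).2)

lemma count_mem_of_subset_range {T : Finset ℕ} {n : ℕ} (hT : T ⊆ range n) :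
    count (· ∈ T) n = #T := by
  rw [count_eq_card_filter_range, filter_mem_eq_inter, inter_eq_right.mpr hT]

lemma count_val_eq_card {N : ℕ} (p : ℕ → Prop) [DecidablePred p] (a : Fin N) :
    count p a = #{b : Fin N | p b ∧ b < a} := by
  rw [count_eq_card_filter_range, ← card_map Fin.valEmbedding]
  congr 1
  ext m
  simp only [mem_filter, mem_range, mem_map, mem_univ, true_and, Fin.valEmbedding_apply]
  constructor
  · rintro ⟨hm, hp⟩
    exact ⟨⟨m, hm.trans a.2⟩, ⟨hp, hm⟩, rfl⟩
  · rintro ⟨b, ⟨hp, hb⟩, rfl⟩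
    exact ⟨hb, hp⟩

end Nat

lemma List.getD_le_foldr_max (l : List ℕ) (r : ℕ) : l.getD r 0 ≤ l.foldr max 0 := by
  induction l generalizing r with
  | nil => simp
  | cons a l ih =>
    cases r with
    | zero => simp
    | succ r => exact (ih r).trans (le_max_right _ _)

lemma mem_skewCells {outer inner : List ℕ} {p : ℕ × ℕ} :
    p ∈ skewCells outer inner ↔
      p.1 < outer.length ∧ inner.getD p.1 0 ≤ p.2 ∧ p.2 < outer.getD p.1 0 := by
  simp only [skewCells, mem_filter, mem_product, mem_range]
  have := outer.getD_le_foldr_max p.1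
  constructor
  · rintro ⟨⟨h, -⟩, h'⟩; exact ⟨h, h'⟩
  · rintro ⟨h, h'⟩; exact ⟨⟨h, by omega⟩, h'⟩

section SYT

variable {outer inner : List ℕ} {pos : Fin #(skewCells outer inner) → skewCells outer inner}

lemma IsSYT.bijective (h : IsSYT outer inner pos) : Function.Bijective pos :=
  (Fintype.bijective_iff_injective_and_card pos).mpr ⟨h.1, by simp⟩

lemma IsSYT.col_lt_col (h : IsSYT outer inner pos) {a b : Fin #(skewCells outer inner)}
    (hab : a < b) (hrow : (pos a).1.1 = (pos b).1.1) : (pos a).1.2 < (pos b).1.2 := by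
  rcases lt_trichotomy (pos a).1.2 (pos b).1.2 with hlt | heq | hgt
  · exact hlt
  · exact absurd (h.1 (Subtype.ext (Prod.ext hrow heq))) hab.ne
  · exact absurd (h.2.1 b a hrow.symm hgt) hab.not_gt

lemma IsSYT.col_eq (h : IsSYT outer inner pos) (a : Fin #(skewCells outer inner)) :
    (pos a).1.2 = inner.getD (pos a).1.1 0 + #{b | (pos b).1.1 = (pos a).1.1 ∧ b < a} := by
  have ha := mem_skewCells.mp (pos a).2
  suffices #{b | (pos b).1.1 = (pos a).1.1 ∧ b < a} =
      #(Ico (inner.getD (pos a).1.1 0) (pos a).1.2) by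
    rw [this, card_Ico]; omega
  refine card_bij (fun b _ => (pos b).1.2) ?_ ?_ ?_
  · intro b hb
    simp only [mem_filter, mem_univ, true_and] at hb
    have hb' := mem_skewCells.mp (pos b).2
    rw [hb.1] at hb'
    exact mem_Ico.mpr ⟨hb'.2.1, h.col_lt_col hb.2 hb.1⟩
  · intro b hb b' hb' hcol
    simp only [mem_filter, mem_univ, true_and] at hb hb'
    exact h.1 (Subtype.ext (Prod.ext (hb.1.trans hb'.1.symm) hcol))
  · intro m hm
    rw [mem_Ico] at hm
    obtain ⟨b, hb⟩ := h.bijective.2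
      ⟨((pos a).1.1, m), mem_skewCells.mpr ⟨ha.1, hm.1, hm.2.trans ha.2.2⟩⟩
    have hrow : (pos b).1.1 = (pos a).1.1 := by rw [hb]
    have hcol : (pos b).1.2 = m := by rw [hb]
    exact ⟨b, by simpa [hrow] using h.2.1 b a hrow (hcol ▸ hm.2), hcol⟩

end SYT

/-- `count (· ∈ T) t` is the column that `t` takes in the second row, and `j + count (· ∉ T) t`
the column of the next entry of the first row. -/
def IsBallot (j : ℕ) (T : Finset ℕ) : Prop :=
  ∀ t ∈ T, count (· ∈ T) t < j + count (· ∉ T) t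

def ballotWords (n k j : ℕ) : Finset (Finset ℕ) :=
  {T ∈ (range (n - j + k)).powerset | #T = k ∧ IsBallot j T}

def wordDescents (T : Finset ℕ) : Finset ℕ := {t ∈ T | 0 < t ∧ t - 1 ∉ T}

def fWord (n k j i : ℕ) : ℤ[X] :=
  ∑ T ∈ ballotWords n k j with #(wordDescents T) = i ∧ 0 ∉ T, X ^ ∑ t ∈ wordDescents T, t

def wordCell (j : ℕ) (T : Finset ℕ) (t : ℕ) : ℕ × ℕ :=
  if t ∈ T then (1, count (· ∈ T) t) else (0, j + count (· ∉ T) t)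

def rowOneIndices {outer inner : List ℕ}
    (pos : Fin #(skewCells outer inner) → skewCells outer inner) : Finset ℕ :=
  ({a | (pos a).1.1 = 1} : Finset _).map Fin.valEmbedding

lemma mem_ballotWords {n k j : ℕ} {T : Finset ℕ} :
    T ∈ ballotWords n k j ↔ T ⊆ range (n - j + k) ∧ #T = k ∧ IsBallot j T := by
  rw [ballotWords, mem_filter, mem_powerset]

lemma wordCell_injective (j : ℕ) (T : Finset ℕ) : Function.Injective (wordCell j T) := by
  intro a b h
  unfold wordCell at h
  by_cases ha : a ∈ T <;> by_cases hb : b ∈ T <;> simp only [ha, hb, if_true, if_false,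
    Prod.mk.injEq, add_right_inj] at h
  · exact count_injective ha hb h.2
  · exact absurd h.1 one_ne_zero
  · exact absurd h.1 zero_ne_one
  · exact count_injective ha hb h.2

lemma isSYT_of_eq_wordCell {outer inner : List ℕ} {j : ℕ} {T : Finset ℕ} (hT : IsBallot j T)
    {pos : Fin #(skewCells outer inner) → skewCells outer inner}
    (hpos : ∀ a, (pos a).1 = wordCell j T a) : IsSYT outer inner pos := by
  refine ⟨fun a b h => Fin.ext (wordCell_injective j T ?_), fun a b hrow hcol => ?_,
    fun a b hcol hrow => ?_⟩
  · rw [← hpos, ← hpos, h]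
  all_goals
    rw [hpos, hpos] at hrow hcol
    unfold wordCell at hrow hcol
    by_cases ha : (a : ℕ) ∈ T <;> by_cases hb : (b : ℕ) ∈ T <;>
      simp only [ha, hb, if_true, if_false] at hrow hcol <;> try omega
  · exact lt_of_count_lt_count hcol
  · exact lt_of_count_lt_count (Nat.lt_of_add_lt_add_left hcol)
  · by_contra hba
    have hba : (b : ℕ) < a := lt_of_le_of_ne (not_lt.mp hba) (fun h => ha (h ▸ hb))
    have := count_monotone (· ∉ T) hba.le
    have := hT b hb
    omega

section rowOneIndices

variable {outer inner : List ℕ} {pos : Fin #(skewCells outer inner) → skewCells outer inner}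

lemma mem_rowOneIndices {t : ℕ} :
    t ∈ rowOneIndices pos ↔ ∃ a : Fin #(skewCells outer inner), (a : ℕ) = t ∧ (pos a).1.1 = 1 := by
  simp [rowOneIndices, and_comm]

lemma val_mem_rowOneIndices {a : Fin #(skewCells outer inner)} :
    (a : ℕ) ∈ rowOneIndices pos ↔ (pos a).1.1 = 1 := by
  simp [mem_rowOneIndices, Fin.val_inj]

lemma rowOneIndices_subset_range : rowOneIndices pos ⊆ range #(skewCells outer inner) := by
  intro t ht
  obtain ⟨a, rfl, -⟩ := mem_rowOneIndices.mp ht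
  exact mem_range.mpr a.2

lemma count_mem_rowOneIndices (a : Fin #(skewCells outer inner)) :
    count (· ∈ rowOneIndices pos) a = #{b | (pos b).1.1 = 1 ∧ b < a} := by
  simp only [count_val_eq_card, val_mem_rowOneIndices]

end rowOneIndices

section TwoRows

variable {n k j : ℕ} {pos : Fin #(skewCells [n, k] [j]) → skewCells [n, k] [j]}

lemma mem_twoRowCells {p : ℕ × ℕ} :
    p ∈ skewCells [n, k] [j] ↔ (p.1 = 0 ∧ j ≤ p.2 ∧ p.2 < n) ∨ (p.1 = 1 ∧ p.2 < k) := by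
  obtain ⟨_ | _ | r, c⟩ := p <;> simp [mem_skewCells]

lemma card_twoRowCells : #(skewCells [n, k] [j]) = n - j + k := by
  have h : skewCells [n, k] [j] = {0} ×ˢ Ico j n ∪ {1} ×ˢ range k := by
    ext ⟨r, c⟩
    simp only [mem_twoRowCells, mem_union, mem_product, mem_singleton, mem_Ico, mem_range]
  have hdisj : Disjoint ({0} ×ˢ Ico j n) ({1} ×ˢ range k) :=
    disjoint_product.mpr (Or.inl (disjoint_singleton.mpr zero_ne_one))
  rw [h, card_union_of_disjoint hdisj, card_product, card_product, card_singleton,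
    card_singleton, card_Ico, card_range, one_mul, one_mul]

lemma row_eq_zero_or_one (a : Fin #(skewCells [n, k] [j])) :
    (pos a).1.1 = 0 ∨ (pos a).1.1 = 1 := by
  rcases mem_twoRowCells.mp (pos a).2 with h | h
  · exact Or.inl h.1
  · exact Or.inr h.1

lemma count_notMem_rowOneIndices (a : Fin #(skewCells [n, k] [j])) :
    count (· ∉ rowOneIndices pos) a = #{b | (pos b).1.1 = 0 ∧ b < a} := by
  simp only [count_val_eq_card, val_mem_rowOneIndices]
  congr 2
  ext b
  rcases row_eq_zero_or_one (pos := pos) b with h | h <;> simp [h]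

lemma IsSYT.cell_eq_wordCell (h : IsSYT [n, k] [j] pos) (a : Fin #(skewCells [n, k] [j])) :
    (pos a).1 = wordCell j (rowOneIndices pos) a := by
  have hcol := h.col_eq a
  unfold wordCell
  split_ifs with ha
  · rw [val_mem_rowOneIndices] at ha
    rw [ha] at hcol
    rw [count_mem_rowOneIndices]
    exact Prod.ext ha (by simpa using hcol)
  · have hrow : (pos a).1.1 = 0 := (row_eq_zero_or_one a).resolve_right
      (fun h => ha (val_mem_rowOneIndices.mpr h))
    rw [hrow] at hcol
    rw [count_notMem_rowOneIndices]
    exact Prod.ext hrow (by simpa using hcol)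

lemma IsSYT.card_rowOneIndices (h : IsSYT [n, k] [j] pos) : #(rowOneIndices pos) = k := by
  rw [rowOneIndices, card_map]
  refine (?_ : _ = #(range k)).trans (card_range k)
  refine card_bij (fun a _ => (pos a).1.2) (fun a ha => ?_) (fun a ha b hb hab => ?_) ?_
  · rw [mem_filter] at ha
    rcases mem_twoRowCells.mp (pos a).2 with h' | h'
    · omega
    · exact mem_range.mpr h'.2
  · simp only [mem_filter, mem_univ, true_and] at ha hb
    exact h.1 (Subtype.ext (Prod.ext (ha.trans hb.symm) hab))
  · intro m hm
    obtain ⟨a, ha⟩ := h.bijective.2 ⟨(1, m), mem_twoRowCells.mpr (Or.inr ⟨rfl, mem_range.mp hm⟩)⟩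
    exact ⟨a, by simp [ha], by simp [ha]⟩

/-- The cell above an entry of the second row is filled earlier, which is the ballot
condition. -/
lemma IsSYT.isBallot (hkn : k ≤ n) (h : IsSYT [n, k] [j] pos) :
    IsBallot j (rowOneIndices pos) := by
  intro t ht
  obtain ⟨a, rfl, hrow⟩ := mem_rowOneIndices.mp ht
  have hcell := h.cell_eq_wordCell a
  have hcol : (pos a).1.2 = count (· ∈ rowOneIndices pos) a := by
    simp [hcell, wordCell, ht]
  have hk : (pos a).1.2 < k := by
    rcases mem_twoRowCells.mp (pos a).2 with h' | h' <;> omega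
  by_contra! hge
  obtain ⟨b, hb⟩ := h.bijective.2
    ⟨(0, (pos a).1.2), mem_twoRowCells.mpr (Or.inl ⟨rfl, by omega, by omega⟩)⟩
  replace hb : (pos b).1 = (0, (pos a).1.2) := congrArg Subtype.val hb
  have hba : b < a := h.2.2 b a (by rw [hb]) (by rw [hb, hrow]; exact one_pos)
  have hbT : (b : ℕ) ∉ rowOneIndices pos := by
    rw [val_mem_rowOneIndices, hb]; exact zero_ne_one
  have hbcol : (pos b).1.2 = j + count (· ∉ rowOneIndices pos) b := by
    simp [h.cell_eq_wordCell b, wordCell, hbT]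
  have := count_strict_mono (p := (· ∉ rowOneIndices pos)) hbT hba
  rw [hb] at hbcol
  simp only at hbcol
  omega

lemma IsSYT.rowOneIndices_mem_ballotWords (hkn : k ≤ n) (h : IsSYT [n, k] [j] pos) :
    rowOneIndices pos ∈ ballotWords n k j :=
  mem_ballotWords.mpr ⟨card_twoRowCells ▸ rowOneIndices_subset_range, h.card_rowOneIndices,
    h.isBallot hkn⟩

lemma wordCell_mem_twoRowCells {T : Finset ℕ} (hT : T ∈ ballotWords n k j) {t : ℕ}
    (ht : t < n - j + k) : wordCell j T t ∈ skewCells [n, k] [j] := by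
  obtain ⟨hsub, hcard, -⟩ := mem_ballotWords.mp hT
  have htotal := count_add_count_not (· ∈ T) (n - j + k)
  rw [count_mem_of_subset_range hsub] at htotal
  rw [mem_twoRowCells]
  unfold wordCell
  split_ifs with htT
  · exact Or.inr ⟨rfl, hcard ▸ count_mem_of_subset_range hsub ▸ count_strict_mono htT ht⟩
  · have := count_strict_mono (p := (· ∉ T)) htT ht
    exact Or.inl ⟨rfl, Nat.le_add_right _ _, by simp only at this ⊢; omega⟩

lemma exists_isSYT_rowOneIndices_eq {T : Finset ℕ} (hT : T ∈ ballotWords n k j) :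
    ∃ pos, IsSYT [n, k] [j] pos ∧ rowOneIndices pos = T := by
  let pos : Fin #(skewCells [n, k] [j]) → skewCells [n, k] [j] := fun a =>
    ⟨wordCell j T a, wordCell_mem_twoRowCells hT (card_twoRowCells ▸ a.2)⟩
  refine ⟨pos, isSYT_of_eq_wordCell (mem_ballotWords.mp hT).2.2 fun _ => rfl, ?_⟩
  ext t
  rw [mem_rowOneIndices]
  constructor
  · rintro ⟨a, rfl, ha⟩
    by_contra h
    simp [pos, wordCell, h] at ha
  · intro ht
    have ht' : t < #(skewCells [n, k] [j]) :=
      card_twoRowCells ▸ mem_range.mp ((mem_ballotWords.mp hT).1 ht)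
    exact ⟨⟨t, ht'⟩, rfl, by simp [pos, wordCell, ht]⟩

lemma desSet_eq_wordDescents : desSet [n, k] [j] pos = wordDescents (rowOneIndices pos) := by
  ext v
  simp only [desSet, wordDescents, mem_filter, mem_range]
  constructor
  · rintro ⟨hv, a, b, rfl, hba, hlt⟩
    obtain ⟨ha, hb⟩ : (pos a).1.1 = 0 ∧ (pos b).1.1 = 1 := by
      rcases row_eq_zero_or_one (pos := pos) a with h | h <;>
        rcases row_eq_zero_or_one (pos := pos) b with h' | h' <;> omega
    refine ⟨hba ▸ val_mem_rowOneIndices.mpr hb, by omega, ?_⟩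
    rw [show (a : ℕ) + 1 - 1 = a by omega, val_mem_rowOneIndices, ha]
    exact zero_ne_one
  · rintro ⟨hv, hv0, hv1⟩
    obtain ⟨b, rfl, hb⟩ := mem_rowOneIndices.mp hv
    refine ⟨b.2, ⟨b - 1, by omega⟩, b, Nat.sub_add_cancel hv0, rfl, ?_⟩
    have ha : (pos ⟨b - 1, by omega⟩).1.1 ≠ 1 := fun h => hv1 (val_mem_rowOneIndices.mpr h)
    rcases row_eq_zero_or_one (pos := pos) ⟨b - 1, by omega⟩ with h | h <;> omega

lemma firstRow_iff_zero_notMem :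
    (∀ a : Fin #(skewCells [n, k] [j]), (a : ℕ) = 0 → (pos a).1.1 = 0) ↔
      0 ∉ rowOneIndices pos := by
  simp only [mem_rowOneIndices, not_exists, not_and]
  refine forall_congr' fun a => imp_congr_right fun _ => ?_
  rcases row_eq_zero_or_one (pos := pos) a with h | h <;> simp [h]

theorem fStar_eq_fWord (i : ℕ) (hkn : k ≤ n) : fStar n k j i = fWord n k j i := by
  have hdes (pos : Fin #(skewCells [n, k] [j]) → skewCells [n, k] [j]) :
      desStat [n, k] [j] pos = #(wordDescents (rowOneIndices pos)) := by
    rw [desStat, desSet_eq_wordDescents]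
  refine sum_bij (fun pos _ => rowOneIndices pos) (fun pos hpos => ?_)
    (fun pos hpos pos' hpos' heq => ?_) (fun T hT => ?_) (fun pos _ => ?_)
  · simp only [SYTs, mem_filter, mem_univ, true_and] at hpos ⊢
    exact ⟨hpos.1.rowOneIndices_mem_ballotWords hkn, hdes pos ▸ hpos.2.1,
      firstRow_iff_zero_notMem.mp hpos.2.2⟩
  · simp only [SYTs, mem_filter, mem_univ, true_and] at hpos hpos'
    funext a
    exact Subtype.ext ((hpos.1.cell_eq_wordCell a).trans (heq ▸ (hpos'.1.cell_eq_wordCell a).symm))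
  · simp only [mem_filter] at hT
    obtain ⟨pos, hpos, rfl⟩ := exists_isSYT_rowOneIndices_eq hT.1
    refine ⟨pos, ?_, rfl⟩
    simp only [SYTs, mem_filter, mem_univ, true_and]
    exact ⟨hpos, (hdes pos).trans hT.2.1, firstRow_iff_zero_notMem.mpr hT.2.2⟩
  · rw [majStat, desSet_eq_wordDescents]; rfl

end TwoRows

def trailingRun (N : ℕ) (T : Finset ℕ) : ℕ := N - 1 - (range N \ T).sup id

lemma exists_eq_add_trailingRun {N : ℕ} {T : Finset ℕ} (hT : #T < N) :
    ∃ M, N = M + 1 + trailingRun N T ∧ M ∉ T ∧ Ico (M + 1) N ⊆ T := by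
  obtain ⟨e, he, heT⟩ :=
    exists_mem_notMem_of_card_lt_card (s := T) (t := range N) (by simpa using hT)
  obtain ⟨M, hM, hsup⟩ := exists_mem_eq_sup (range N \ T) ⟨e, mem_sdiff.mpr ⟨he, heT⟩⟩ id
  rw [mem_sdiff, mem_range] at hM
  refine ⟨M, by rw [trailingRun, hsup, id]; omega, hM.2, fun t ht => ?_⟩
  rw [mem_Ico] at ht
  by_contra htT
  have := hsup ▸ le_sup (f := id) (mem_sdiff.mpr ⟨mem_range.mpr ht.2, htT⟩)
  simp only [id] at this
  omega

lemma trailingRun_eq {M ℓ : ℕ} {T : Finset ℕ} (hM : M ∉ T)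
    (hrun : Ico (M + 1) (M + 1 + ℓ) ⊆ T) : trailingRun (M + 1 + ℓ) T = ℓ := by
  have hsup : (range (M + 1 + ℓ) \ T).sup id = M := by
    refine le_antisymm (Finset.sup_le fun s hs => ?_)
      (le_sup (f := id) (mem_sdiff.mpr ⟨mem_range.mpr (by omega), hM⟩))
    rw [mem_sdiff, mem_range] at hs
    by_contra! hMs
    exact hs.2 (hrun (mem_Ico.mpr ⟨hMs, hs.1⟩))
  rw [trailingRun, hsup]
  omega

/-- Appending to `T` one entry of the first row (at index `M`) followed by `ℓ` entries of the
second row. -/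
def appendRun (M ℓ : ℕ) (T : Finset ℕ) : Finset ℕ := T ∪ Ico (M + 1) (M + 1 + ℓ)

section appendRun

variable {M ℓ : ℕ} {T : Finset ℕ}

@[simp] lemma appendRun_zero : appendRun M 0 T = T := by simp [appendRun]

lemma mem_appendRun_of_lt {s : ℕ} (hs : s < M + 1) :
    s ∈ appendRun M ℓ T ↔ s ∈ T := by
  rw [appendRun, mem_union, mem_Ico, or_iff_left (by omega)]

lemma filter_lt_appendRun (hT : T ⊆ range M) : {t ∈ appendRun M ℓ T | t < M} = T := by
  ext t
  rw [mem_filter]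
  constructor
  · rintro ⟨ht, htM⟩; exact (mem_appendRun_of_lt (by omega)).mp ht
  · intro ht
    have htM := mem_range.mp (hT ht)
    exact ⟨(mem_appendRun_of_lt (by omega)).mpr ht, htM⟩

lemma appendRun_filter_lt (hT : T ⊆ range (M + 1 + ℓ)) (hM : M ∉ T)
    (hrun : Ico (M + 1) (M + 1 + ℓ) ⊆ T) : appendRun M ℓ {t ∈ T | t < M} = T := by
  ext t
  simp only [appendRun, mem_union, mem_filter, mem_Ico]
  constructor
  · rintro (⟨ht, -⟩ | ht)
    exacts [ht, hrun (mem_Ico.mpr ht)]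
  · intro ht
    have := mem_range.mp (hT ht)
    rcases lt_trichotomy t M with h | rfl | h
    exacts [Or.inl ⟨ht, h⟩, absurd ht hM, Or.inr ⟨h, this⟩]

lemma card_appendRun (hT : T ⊆ range M) : #(appendRun M ℓ T) = #T + ℓ := by
  rw [appendRun, card_union_of_disjoint, card_Ico, Nat.add_sub_cancel_left]
  rw [disjoint_left]
  intro t ht ht'
  have := mem_range.mp (hT ht)
  rw [mem_Ico] at ht'
  omega

lemma count_appendRun_of_le {t : ℕ} (ht : t ≤ M + 1) :
    count (· ∈ appendRun M ℓ T) t = count (· ∈ T) t ∧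
      count (· ∉ appendRun M ℓ T) t = count (· ∉ T) t :=
  ⟨count_congr_of_lt fun s hs => mem_appendRun_of_lt (by omega),
    count_congr_of_lt fun s hs => not_congr (mem_appendRun_of_lt (by omega))⟩

lemma count_appendRun_add (hT : T ⊆ range M) {d : ℕ} (hd : d ≤ ℓ) :
    count (· ∈ appendRun M ℓ T) (M + 1 + d) = #T + d ∧
      count (· ∉ appendRun M ℓ T) (M + 1 + d) = M + 1 - #T := by
  have hrun {x : ℕ} (hx : x < d) : M + 1 + x ∈ appendRun M ℓ T :=
    mem_union_right _ (mem_Ico.mpr ⟨by omega, by omega⟩)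
  obtain ⟨hin, hout⟩ := count_appendRun_of_le (M := M) (ℓ := ℓ) (T := T) le_rfl
  have hT' : T ⊆ range (M + 1) := hT.trans (range_subset_range.mpr (by omega))
  have htotal := count_add_count_not (· ∈ T) (M + 1)
  rw [count_mem_of_subset_range hT'] at htotal
  rw [count_add _ (M + 1) d, count_add _ (M + 1) d, hin, hout, count_mem_of_subset_range hT',
    count_of_forall fun x hx => hrun hx, count_of_forall_not fun x hx => not_not.mpr (hrun hx)]
  omega

lemma isBallot_appendRun_iff (hT : T ⊆ range M) {j : ℕ} (hfit : #T + ℓ ≤ j + (M + 1 - #T)) :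
    IsBallot j (appendRun M ℓ T) ↔ IsBallot j T := by
  constructor
  · intro h t ht
    have htM := mem_range.mp (hT ht)
    have := h t (mem_union_left _ ht)
    rwa [(count_appendRun_of_le (by omega)).1, (count_appendRun_of_le (by omega)).2] at this
  · intro h t ht
    rcases mem_union.mp ht with ht | ht
    · have htM := mem_range.mp (hT ht)
      rw [(count_appendRun_of_le (by omega)).1, (count_appendRun_of_le (by omega)).2]
      exact h t ht
    · obtain ⟨d, rfl⟩ : ∃ d, t = M + 1 + d := ⟨t - (M + 1), by rw [mem_Ico] at ht; omega⟩
      have hd : d < ℓ := by rw [mem_Ico] at ht; omega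
      rw [(count_appendRun_add hT hd.le).1, (count_appendRun_add hT hd.le).2]
      omega

lemma wordDescents_appendRun (hT : T ⊆ range M) (hℓ : 0 < ℓ) :
    wordDescents (appendRun M ℓ T) = insert (M + 1) (wordDescents T) := by
  have hlt {t : ℕ} (ht : t ∈ T) : t < M := mem_range.mp (hT ht)
  ext t
  simp only [wordDescents, appendRun, mem_insert, mem_filter, mem_union, mem_Ico]
  constructor
  · rintro ⟨ht | ht, ht0, ht1⟩
    · exact Or.inr ⟨ht, ht0, fun h => ht1 (Or.inl h)⟩
    · left; by_contra hne; exact ht1 (Or.inr ⟨by omega, by omega⟩)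
  · rintro (rfl | ⟨ht, ht0, ht1⟩)
    · exact ⟨Or.inr ⟨le_rfl, by omega⟩, by omega, by
        rintro (h | h)
        · exact absurd (hlt h) (by omega)
        · omega⟩
    · exact ⟨Or.inl ht, ht0, by rintro (h | h); exacts [ht1 h, absurd (hlt ht) (by omega)]⟩

lemma succ_notMem_wordDescents (hT : T ⊆ range M) : M + 1 ∉ wordDescents T := fun h =>
  absurd (mem_range.mp (hT (mem_filter.mp h).1)) (by omega)

end appendRun

section Recursion

variable {n k j ℓ : ℕ}

lemma appendRun_mem_ballotWords_iff (hℓk : ℓ ≤ k) (hkn : k ≤ n) (hj : j < n) {T : Finset ℕ}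
    (hT : T ⊆ range (n - 1 - j + (k - ℓ))) :
    appendRun (n - 1 - j + (k - ℓ)) ℓ T ∈ ballotWords n k j ↔
      T ∈ ballotWords (n - 1) (k - ℓ) j := by
  set M := n - 1 - j + (k - ℓ)
  have hN : n - j + k = M + 1 + ℓ := by omega
  have hsub : appendRun M ℓ T ⊆ range (M + 1 + ℓ) := union_subset
    (hT.trans (range_subset_range.mpr (by omega))) fun t ht => by
      rw [mem_Ico] at ht; exact mem_range.mpr ht.2
  rw [mem_ballotWords, mem_ballotWords, card_appendRun hT, hN]
  constructor
  · rintro ⟨-, hcard, hb⟩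
    exact ⟨hT, by omega, (isBallot_appendRun_iff hT (by omega)).mp hb⟩
  · rintro ⟨-, hcard, hb⟩
    exact ⟨hsub, by omega, (isBallot_appendRun_iff hT (by omega)).mpr hb⟩

lemma filter_trailingRun_ballotWords (hℓk : ℓ ≤ k) (hkn : k ≤ n) (hj : j < n) :
    {T ∈ ballotWords n k j | trailingRun (n - j + k) T = ℓ} =
      (ballotWords (n - 1) (k - ℓ) j).image (appendRun (n - 1 - j + (k - ℓ)) ℓ) := by
  set M := n - 1 - j + (k - ℓ)
  have hN : n - j + k = M + 1 + ℓ := by omega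
  ext T
  rw [mem_filter, mem_image, hN]
  constructor
  · rintro ⟨hT, hrun⟩
    obtain ⟨hsub, hcard, -⟩ := mem_ballotWords.mp hT
    obtain ⟨M', hM', hM'T, hIco⟩ := exists_eq_add_trailingRun (N := M + 1 + ℓ) (T := T)
      (by omega)
    obtain rfl : M' = M := by omega
    rw [hrun] at hM'
    rw [hN] at hsub
    have hT' := (appendRun_filter_lt hsub hM'T (hM' ▸ hIco)).symm
    exact ⟨_, (appendRun_mem_ballotWords_iff hℓk hkn hj (fun t ht =>
      mem_range.mpr (mem_filter.mp ht).2)).mp (hT' ▸ hT), hT'.symm⟩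
  · rintro ⟨T', hT', rfl⟩
    have hsub := (mem_ballotWords.mp hT').1
    refine ⟨(appendRun_mem_ballotWords_iff hℓk hkn hj hsub).mpr hT',
      trailingRun_eq (fun h => ?_) subset_union_right⟩
    have := mem_range.mp (hsub ((mem_appendRun_of_lt (Nat.lt_succ_self M)).mp h))
    omega

lemma sum_filter_trailingRun_eq {β : Type*} [AddCommMonoid β] (hℓk : ℓ ≤ k) (hkn : k ≤ n)
    (hj : j < n) (P : Finset ℕ → Prop) [DecidablePred P] (F : Finset ℕ → β) :
    ∑ T ∈ {T ∈ ballotWords n k j | P T} with trailingRun (n - j + k) T = ℓ, F T =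
      ∑ T ∈ ballotWords (n - 1) (k - ℓ) j with P (appendRun (n - 1 - j + (k - ℓ)) ℓ T),
        F (appendRun (n - 1 - j + (k - ℓ)) ℓ T) := by
  rw [filter_comm, filter_trailingRun_ballotWords hℓk hkn hj, filter_image, sum_image]
  intro T hT T' hT' h
  rw [← filter_lt_appendRun (mem_ballotWords.mp (mem_filter.mp hT).1).1, h,
    filter_lt_appendRun (mem_ballotWords.mp (mem_filter.mp hT').1).1]

lemma trailingRun_lt_or_eq_zero (hkn : k ≤ n) (hj : j < n) {T : Finset ℕ}
    (hT : T ∈ ballotWords n k j) (hdes : #(wordDescents T) ≠ 1) :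
    trailingRun (n - j + k) T < k ∨ trailingRun (n - j + k) T = 0 := by
  obtain ⟨-, hcard, -⟩ := mem_ballotWords.mp hT
  obtain ⟨M, hN, -, hrun⟩ := exists_eq_add_trailingRun (T := T) (N := n - j + k) (by omega)
  have hle := card_le_card hrun
  rw [card_Ico, hcard] at hle
  by_contra! h
  have hT : T ∈ {T ∈ ballotWords n k j | trailingRun (n - j + k) T = k} :=
    mem_filter.mpr ⟨hT, by omega⟩
  rw [filter_trailingRun_ballotWords le_rfl hkn hj, mem_image] at hT
  obtain ⟨T', hT', rfl⟩ := hT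
  obtain rfl : T' = ∅ := by simpa using (mem_ballotWords.mp hT').2.1
  apply hdes
  rw [wordDescents_appendRun (empty_subset _) (by omega)]
  simp [wordDescents]

theorem fWord_eq_add_sum {i : ℕ} (hkn : k ≤ n) (hj : j < n) (hi : 1 < i) :
    fWord n k j i = fWord (n - 1) k j i +
      ∑ l ∈ Icc 1 (k - 1), X ^ (n - j + k - l) * fWord (n - 1) (k - l) j (i - 1) := by
  have hfiber : ∀ T ∈ {T ∈ ballotWords n k j | #(wordDescents T) = i ∧ 0 ∉ T},
      trailingRun (n - j + k) T ∈ insert 0 (Icc 1 (k - 1)) := by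
    intro T hT
    rw [mem_filter] at hT
    have := trailingRun_lt_or_eq_zero hkn hj hT.1 (by omega)
    rw [mem_insert, mem_Icc]
    omega
  rw [fWord, ← sum_fiberwise_of_maps_to hfiber, sum_insert (by simp)]
  congr 1
  · rw [sum_filter_trailingRun_eq (zero_le k) hkn hj]
    simp only [appendRun_zero, Nat.sub_zero]
    rfl
  · refine sum_congr rfl fun l hl => ?_
    rw [mem_Icc] at hl
    set M := n - 1 - j + (k - l)
    have hM : M + 1 = n - j + k - l := by omega
    rw [sum_filter_trailingRun_eq (by omega) hkn hj, fWord, mul_sum]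
    refine sum_congr (filter_congr fun T hT => ?_) fun T hT => ?_
    · have hsub := (mem_ballotWords.mp hT).1
      rw [wordDescents_appendRun hsub (by omega),
        card_insert_of_notMem (succ_notMem_wordDescents hsub),
        mem_appendRun_of_lt (Nat.succ_pos M)]
      exact and_congr_left' (by omega)
    · have hsub := (mem_ballotWords.mp (mem_filter.mp hT).1).1
      rw [wordDescents_appendRun hsub (by omega), sum_insert (succ_notMem_wordDescents hsub),
        pow_add, hM, mul_comm]

end Recursion

theorem stmt9_general (n k j i : ℕ) (hkn : k < n) (hj : j < n) (hi : 1 < i) :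
    fStar n k j i =
      fStar (n - 1) k j i +
        ∑ l ∈ Finset.Icc 1 (k - 1), X ^ (n - j + k - l) * fStar (n - 1) (k - l) j (i - 1) := by
  rw [fStar_eq_fWord i hkn.le, fStar_eq_fWord i (Nat.le_sub_one_of_lt hkn),
    fWord_eq_add_sum hkn.le hj hi]
  refine congrArg (_ + ·) (sum_congr rfl fun l _ => ?_)
  rw [fStar_eq_fWord (i - 1) (by omega)]

/-- For integers `n > k > 0`, `0 ≤ j < n`, `i > 1`,
`f*_{(n,k)∖(j),i}(q) = f*_{(n-1,k)∖(j),i}(q)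
  + Σ_{ℓ=1}^{k-1} q^{n-j+k-ℓ} f*_{(n-1,k-ℓ)∖(j),i-1}(q)`. -/
theorem stmt9 (n k j i : ℕ) (hk : 0 < k) (hkn : k < n) (hj : j < n) (hi : 1 < i) :
    fStar n k j i =
      fStar (n - 1) k j i +
        ∑ l ∈ Finset.Icc 1 (k - 1), X ^ (n - j + k - l) * fStar (n - 1) (k - l) j (i - 1) :=
  stmt9_general n k j i hkn hj hi
end
end
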